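/- arXiv:2403.07597 — 3 statements merged into one kernel-verified Lean document; each statement's English description precedes it below -/
import Mathlib

section
/- Let C^g ∪ Q^g be a G-cycle factor of a semicomplete multipartite digraph D where C^g = u_1 u_2 ... u_p u_1 with p >= 2, and suppose D has no spanning G-cycle with at least ℓ(Q^g) + ℓ(C^g) arcs. Then for every pair v, v^+ of consecutive vertices on Q^g, if v is not singular with respect to C^g, then either v has a partner on C^g, or vv^+ is an arc of D and it has a partner on C^g. -/
open Classical

universe u v

/-- A semicomplete multipartite digraph: `A` is the arc relation and `part` assigns to
each vertex its partite set.  There are no arcs inside a partite set and at least one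
arc between any two vertices of different partite sets. -/
structure IsSMD {V : Type u} {K : Type v} (A : V → V → Prop) (part : V → K) : Prop where
  noInside : ∀ x y : V, part x = part y → ¬ A x y
  adj : ∀ x y : V, part x ≠ part y → A x y ∨ A y x

/-- An extended semicomplete digraph: a semicomplete multipartite digraph in which any
two vertices of the same partite set have identical in- and out-neighbourhoods. -/
def IsESD {V : Type u} {K : Type v} (A : V → V → Prop) (part : V → K) : Prop :=
  IsSMD A part ∧ ∀ x y : V, part x = part y →
    (∀ z, A x z ↔ A y z) ∧ (∀ z, A z x ↔ A z y)

/-- A generalized path (G-path): a sequence of distinct vertices in which each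
consecutive pair is either an arc or a pair of vertices in the same partite set. -/
structure GPath {V : Type u} {K : Type v} (A : V → V → Prop) (part : V → K) where
  verts : List V
  ne : verts ≠ []
  nodup : verts.Nodup
  chain : verts.Chain' fun a b => A a b ∨ part a = part b

/-- A generalized cycle (G-cycle): as a G-path, but also the pair consisting of the
last and the first vertex is an arc or lies in one partite set. -/
structure GCycle {V : Type u} {K : Type v} (A : V → V → Prop) (part : V → K)
    extends GPath A part where
  close : A (verts.getLast ne) (verts.head ne) ∨
    part (verts.getLast ne) = part (verts.head ne)

variable {V : Type u} {K : Type v} {A : V → V → Prop} {part : V → K}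

/-- The length of a G-path: the number of arcs it uses. -/
noncomputable def GPath.len (P : GPath A part) : ℕ :=
  (P.verts.zip P.verts.tail).countP fun q => decide (A q.1 q.2)

/-- The length of a G-cycle: the number of arcs it uses (cyclically). -/
noncomputable def GCycle.len (C : GCycle A part) : ℕ :=
  (C.toGPath.verts.zip (C.toGPath.verts.rotate 1)).countP fun q => decide (A q.1 q.2)

/-- `x` and `y` are (cyclically) consecutive on the G-cycle `C`, `y` following `x`. -/
def GCycle.consec (C : GCycle A part) (x y : V) : Prop :=
  (x, y) ∈ C.toGPath.verts.zip (C.toGPath.verts.rotate 1)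

/-- The pair `(x, y)` (an `(x,y)`-G-path) has a partner on the G-cycle `C`:
there are consecutive vertices `w, w'` of `C` with `w → x` and `y → w'`. -/
def GCycle.partner (C : GCycle A part) (x y : V) : Prop :=
  ∃ w w' : V, C.consec w w' ∧ A w x ∧ A y w'

/-- `v` is out-singular with respect to `C` (that is, `v ⇒ C`). -/
def GCycle.OutSingular (C : GCycle A part) (v : V) : Prop :=
  ∀ w ∈ C.toGPath.verts, (part v ≠ part w → A v w) ∧ ¬ A w v

/-- `v` is in-singular with respect to `C` (that is, `C ⇒ v`). -/
def GCycle.InSingular (C : GCycle A part) (v : V) : Prop :=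
  ∀ w ∈ C.toGPath.verts, (part v ≠ part w → A w v) ∧ ¬ A v w

/-- `v` is singular with respect to `C`. -/
def GCycle.SingularWrt (C : GCycle A part) (v : V) : Prop :=
  C.OutSingular v ∨ C.InSingular v

/-- `C₁ ≃> C₂`: `C₁` has singular vertices w.r.t. `C₂`, all of which are out-singular,
and `C₂` has singular vertices w.r.t. `C₁`, all of which are in-singular. -/
def SimGt (C₁ C₂ : GCycle A part) : Prop :=
  (∃ v ∈ C₁.toGPath.verts, C₂.SingularWrt v) ∧
  (∀ v ∈ C₁.toGPath.verts, C₂.SingularWrt v → C₂.OutSingular v) ∧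
  (∃ v ∈ C₂.toGPath.verts, C₁.SingularWrt v) ∧
  (∀ v ∈ C₂.toGPath.verts, C₁.SingularWrt v → C₁.InSingular v)

/-- A G-cycle subdigraph: a collection of pairwise vertex-disjoint G-cycles. -/
structure GCSub {V' : Type u} {K' : Type v} (A' : V' → V' → Prop) (part' : V' → K') where
  cycles : List (GCycle A' part')
  disj : cycles.Pairwise fun C C' => ∀ x ∈ C.toGPath.verts, x ∉ C'.toGPath.verts

/-- The total number of arcs used by a G-cycle subdigraph. -/
noncomputable def GCSub.arcs (F : GCSub A part) : ℕ :=
  (F.cycles.map GCycle.len).sum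

/-- A G-cycle factor: a G-cycle subdigraph covering all vertices. -/
def GCSub.IsFactor (F : GCSub A part) : Prop :=
  ∀ v : V, ∃ C ∈ F.cycles, v ∈ C.toGPath.verts

/-- Strong connectivity of a digraph. -/
def IsStrong (A : V → V → Prop) : Prop :=
  ∀ x y : V, Relation.ReflTransGen A x y

/-- Strong connectivity after deleting the vertex set `X`. -/
def IsStrongOutside (A : V → V → Prop) (X : Set V) : Prop :=
  ∀ x y : V, x ∉ X → y ∉ X →
    Relation.ReflTransGen (fun a b => A a b ∧ a ∉ X ∧ b ∉ X) x y

/-- `k`-strong connectivity. -/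
def KStrong [Fintype V] (A : V → V → Prop) (k : ℕ) : Prop :=
  k + 1 ≤ Fintype.card V ∧
    ∀ X : Finset V, X.card ≤ k - 1 → IsStrongOutside A (↑X : Set V)

namespace Stmt10Helpers

variable {α : Type*}

lemma zip_tail_concat : ∀ (l : List α) (h : l ≠ []) (c : α),
    l.zip (l.tail ++ [c]) = l.zip l.tail ++ [(l.getLast h, c)]
  | [x], _, c => by simp
  | x :: y :: t, _, c => by
    have ih := zip_tail_concat (y :: t) (List.cons_ne_nil y t) c
    simp only [List.tail_cons] at ih ⊢
    simp [List.zip_cons_cons, ih, List.getLast_cons (List.cons_ne_nil y t)]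

lemma rotate_one_ne (l : List α) (h : l ≠ []) : l.rotate 1 = l.tail ++ [l.head h] := by
  cases l with
  | nil => simp at h
  | cons a t => simp [List.rotate_cons_succ]

lemma zipCyc_eq (l : List α) (h : l ≠ []) :
    l.zip (l.rotate 1) = l.zip l.tail ++ [(l.getLast h, l.head h)] := by
  rw [rotate_one_ne l h, zip_tail_concat l h]

lemma zip_tail_append (l₁ l₂ : List α) (h₁ : l₁ ≠ []) (h₂ : l₂ ≠ []) :
    (l₁ ++ l₂).zip (l₁ ++ l₂).tail
      = l₁.zip l₁.tail ++ (l₁.getLast h₁, l₂.head h₂) :: l₂.zip l₂.tail := by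
  induction l₁ with
  | nil => simp at h₁
  | cons a t ih =>
    cases t with
    | nil =>
      cases l₂ with
      | nil => simp at h₂
      | cons b s => simp
    | cons b s =>
      have := ih (List.cons_ne_nil b s)
      simp only [List.cons_append, List.tail_cons] at this ⊢
      simp [this, List.getLast_cons (List.cons_ne_nil b s)]

lemma chain'_iff_zip {R : α → α → Prop} : ∀ {l : List α},
    l.Chain' R ↔ ∀ p ∈ l.zip l.tail, R p.1 p.2
  | [] => by simp; exact List.isChain_nil
  | [a] => by simp; exact List.isChain_singleton a
  | a :: b :: t => by
    show List.IsChain R (a :: b :: t) ↔ _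
    rw [List.isChain_cons_cons, show List.IsChain R (b :: t) ↔ _ from chain'_iff_zip (l := b :: t)]
    simp_all

lemma chain_prop_last {P : α → Prop} : ∀ (l : List α) (h : l ≠ [])
    (_ : ∀ p ∈ l.zip l.tail, P p.1 → P p.2) (x : α), x ∈ l → P x → P (l.getLast h)
  | [a], _, _, x, hx, hPx => by simp at hx; simpa [hx] using hPx
  | a :: b :: t, _, hstep, x, hx, hPx => by
    rw [List.getLast_cons (List.cons_ne_nil b t)]
    rcases List.mem_cons.mp hx with rfl | hx
    · refine chain_prop_last (b :: t) (List.cons_ne_nil b t)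
        (fun p hp => hstep p (by simp only [List.tail_cons] at hp ⊢; simp only [List.zip_cons_cons, List.mem_cons]; exact Or.inr hp)) b (by simp) ?_
      exact hstep (x, b) (by simp) hPx
    · exact chain_prop_last (b :: t) (List.cons_ne_nil b t)
        (fun p hp => hstep p (by simp only [List.tail_cons] at hp ⊢; simp only [List.zip_cons_cons, List.mem_cons]; exact Or.inr hp)) x hx hPx

lemma chain_prop_head_all {P : α → Prop} : ∀ (l : List α) (h : l ≠ [])
    (_ : ∀ p ∈ l.zip l.tail, P p.1 → P p.2), P (l.head h) → ∀ x ∈ l, P x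
  | [a], _, _, hP, x, hx => by simp at hx; simpa [hx] using hP
  | a :: b :: t, _, hstep, hP, x, hx => by
    rcases List.mem_cons.mp hx with rfl | hx
    · exact hP
    · refine chain_prop_head_all (b :: t) (List.cons_ne_nil b t)
        (fun p hp => hstep p (by simp only [List.tail_cons] at hp ⊢; simp only [List.zip_cons_cons, List.mem_cons]; exact Or.inr hp)) ?_ x hx
      exact hstep (a, b) (by simp) hP

lemma chain_prop_head {P : α → Prop} : ∀ (l : List α) (h : l ≠ [])
    (_ : ∀ p ∈ l.zip l.tail, P p.2 → P p.1) (x : α), x ∈ l → P x → P (l.head h)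
  | [a], _, _, x, hx, hPx => by simp at hx; simpa [hx] using hPx
  | a :: b :: t, _, hstep, x, hx, hPx => by
    rcases List.mem_cons.mp hx with rfl | hx
    · exact hPx
    · refine hstep (a, b) (by simp) ?_
      exact chain_prop_head (b :: t) (List.cons_ne_nil b t)
        (fun p hp => hstep p (by simp only [List.tail_cons] at hp ⊢; simp only [List.zip_cons_cons, List.mem_cons]; exact Or.inr hp)) x hx hPx

lemma chain_prop_last_all {P : α → Prop} : ∀ (l : List α) (h : l ≠ [])
    (_ : ∀ p ∈ l.zip l.tail, P p.2 → P p.1), P (l.getLast h) → ∀ x ∈ l, P x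
  | [a], _, _, hP, x, hx => by simp at hx; simpa [hx] using hP
  | a :: b :: t, _, hstep, hP, x, hx => by
    rw [List.getLast_cons (List.cons_ne_nil b t)] at hP
    have hall := chain_prop_last_all (b :: t) (List.cons_ne_nil b t)
      (fun p hp => hstep p (by simp only [List.tail_cons] at hp ⊢; simp only [List.zip_cons_cons, List.mem_cons]; exact Or.inr hp)) hP
    rcases List.mem_cons.mp hx with rfl | hx
    · exact hstep (x, b) (by simp) (hall b (by simp))
    · exact hall x hx

lemma cyc_prop_fwd {P : α → Prop} (l : List α) (h : l ≠ [])
    (hstep : ∀ p ∈ l.zip (l.rotate 1), P p.1 → P p.2)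
    (x : α) (hx : x ∈ l) (hPx : P x) : ∀ y ∈ l, P y := by
  rw [zipCyc_eq l h] at hstep
  have htail : ∀ p ∈ l.zip l.tail, P p.1 → P p.2 := fun p hp => hstep p (by simp [hp])
  have hwrap : P (l.getLast h) → P (l.head h) :=
    hstep (l.getLast h, l.head h) (by simp)
  exact chain_prop_head_all l h htail (hwrap (chain_prop_last l h htail x hx hPx))

lemma cyc_prop_bwd {P : α → Prop} (l : List α) (h : l ≠ [])
    (hstep : ∀ p ∈ l.zip (l.rotate 1), P p.2 → P p.1)
    (x : α) (hx : x ∈ l) (hPx : P x) : ∀ y ∈ l, P y := by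
  rw [zipCyc_eq l h] at hstep
  have htail : ∀ p ∈ l.zip l.tail, P p.2 → P p.1 := fun p hp => hstep p (by simp [hp])
  have hwrap : P (l.head h) → P (l.getLast h) :=
    hstep (l.getLast h, l.head h) (by simp)
  exact chain_prop_last_all l h htail (hwrap (chain_prop_head l h htail x hx hPx))

lemma zipCyc_rotate (l : List α) (k : ℕ) :
    (l.rotate k).zip ((l.rotate k).rotate 1) = (l.zip (l.rotate 1)).rotate k := by
  rcases eq_or_ne l [] with rfl | h
  · simp
  have hn : 0 < l.length := List.length_pos_iff.mpr h
  apply List.ext_getElem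
  · simp [List.length_zip, List.length_rotate]
  · intro i h1 h2
    have hi : i < l.length := by
      simpa [List.length_zip, List.length_rotate] using h1
    have hlen : (l.zip (l.rotate 1)).length = l.length := by
      simp [List.length_zip, List.length_rotate]
    rw [List.getElem_zip, List.getElem_rotate, List.getElem_rotate, List.getElem_rotate]
    rw [List.getElem_rotate]
    rw [List.getElem_zip, List.getElem_rotate]
    simp only [List.length_rotate, hlen]
    refine Prod.ext rfl ?_
    simp only
    congr 1
    rw [Nat.mod_add_mod, Nat.mod_add_mod]
    congr 1
    omega


lemma consec_rotate (l : List α) {x y : α} (hxy : (x, y) ∈ l.zip (l.rotate 1)) :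
    ∃ m : ℕ, ∃ hne : l.rotate m ≠ [],
      (l.rotate m).head hne = y ∧ (l.rotate m).getLast hne = x := by
  have hl : l ≠ [] := by rintro rfl; simp at hxy
  have hn : 0 < l.length := List.length_pos_iff.mpr hl
  obtain ⟨i, hi, hget⟩ := List.mem_iff_getElem.mp hxy
  have hiz : i < l.length := by simpa [List.length_zip, List.length_rotate] using hi
  rw [List.getElem_zip] at hget
  have hx : l[i]'(by simpa using hiz) = x := congrArg Prod.fst hget
  have hy : (l.rotate 1)[i]'(by simpa [List.length_rotate] using hiz) = y :=
    congrArg Prod.snd hget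
  rw [List.getElem_rotate] at hy
  refine ⟨i + 1, by simp [List.rotate_eq_nil_iff, hl], ?_, ?_⟩
  · rw [List.head_eq_getElem_zero, List.getElem_rotate]
    simpa using hy
  · rw [List.getLast_eq_getElem, List.getElem_rotate]
    have : (l.rotate (i + 1)).length - 1 + (i + 1) = l.length + i := by
      rw [List.length_rotate]; omega
    rw [this] at *
    · simpa [Nat.add_mod_left, Nat.mod_eq_of_lt hiz] using hx


noncomputable def fA (A : α → α → Prop) (x y : α) : ℕ := if A x y then 1 else 0

lemma countP_pair {A : α → α → Prop} (a b : α) :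
    List.countP (fun q : α × α => decide (A q.1 q.2)) [(a, b)] = fA A a b := by
  simp [fA, List.countP_cons]

lemma fA_of {A : α → α → Prop} {x y : α} (h : A x y) : fA A x y = 1 := if_pos h

lemma fA_of_not {A : α → α → Prop} {x y : α} (h : ¬ A x y) : fA A x y = 0 := if_neg h

lemma fA_le_one {A : α → α → Prop} (x y : α) : fA A x y ≤ 1 := by
  unfold fA; split <;> omega

lemma exists_succ (l : List α) (x : α) (hx : x ∈ l) :
    ∃ y, (x, y) ∈ l.zip (l.rotate 1) := by
  obtain ⟨i, hi, hget⟩ := List.mem_iff_getElem.mp hx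
  refine ⟨(l.rotate 1)[i]'(by simpa [List.length_rotate] using hi), ?_⟩
  rw [List.mem_iff_getElem]
  refine ⟨i, by simp only [List.length_zip, List.length_rotate, min_self]; exact hi, ?_⟩
  simp [List.getElem_zip, hget]

lemma exists_pred (l : List α) (y : α) (hy : y ∈ l) :
    ∃ x, (x, y) ∈ l.zip (l.rotate 1) := by
  obtain ⟨i, hi, hget⟩ := List.mem_iff_getElem.mp (List.mem_rotate.mpr hy : y ∈ l.rotate 1)
  have hil : i < l.length := by simpa [List.length_rotate] using hi
  refine ⟨l[i], ?_⟩
  rw [List.mem_iff_getElem]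
  refine ⟨i, by simp only [List.length_zip, List.length_rotate, min_self]; exact hil, ?_⟩
  simp [List.getElem_zip, hget]


variable {V K : Type} {A : V → V → Prop} {part : V → K}

lemma cyc_rel (C : GCycle A part) :
    ∀ p ∈ C.toGPath.verts.zip (C.toGPath.verts.rotate 1),
      A p.1 p.2 ∨ part p.1 = part p.2 := by
  rw [zipCyc_eq _ C.toGPath.ne]
  intro p hp
  rcases List.mem_append.mp hp with hp | hp
  · exact (chain'_iff_zip.mp C.toGPath.chain) p hp
  · simp only [List.mem_singleton] at hp
    subst hp
    exact C.close

lemma len_eq_countP (C : GCycle A part) :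
    C.len = List.countP (fun q : V × V => decide (A q.1 q.2))
      (C.toGPath.verts.zip (C.toGPath.verts.rotate 1)) := rfl

lemma build_cycle (C Q : GCycle A part)
    (hdisj : ∀ x ∈ C.toGPath.verts, x ∉ Q.toGPath.verts)
    {x y v v' : V} (hxy : C.consec x y) (hvv : Q.consec v v')
    (hentry : A x v' ∨ part x = part v') (hexit : A v y ∨ part v = part y) :
    ∃ C' : GCycle A part,
      (∀ w : V, w ∈ C.toGPath.verts ∨ w ∈ Q.toGPath.verts → w ∈ C'.toGPath.verts) ∧
      C'.len + fA A x y + fA A v v' = C.len + Q.len + fA A x v' + fA A v y := by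
  obtain ⟨m₁, hne₁, hhead₁, hlast₁⟩ := consec_rotate _ hxy
  obtain ⟨m₂, hne₂, hhead₂, hlast₂⟩ := consec_rotate _ hvv
  set lc := C.toGPath.verts.rotate m₁ with hlc
  set lq := Q.toGPath.verts.rotate m₂ with hlq
  set M := lc ++ lq with hM
  have hMne : M ≠ [] := by simp [hM, hne₁]
  have hMtail : M.zip M.tail
      = lc.zip lc.tail ++ (x, v') :: lq.zip lq.tail := by
    rw [hM, zip_tail_append lc lq hne₁ hne₂, hlast₁, hhead₂]
  have hlastM : M.getLast hMne = v := (List.getLast_append_of_ne_nil hMne hne₂).trans hlast₂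
  have hheadM : M.head hMne = y := (List.head_append_of_ne_nil hne₁).trans hhead₁
  -- pairs of rotated cycles satisfy the relation
  have hrelc : ∀ p ∈ lc.zip (lc.rotate 1), A p.1 p.2 ∨ part p.1 = part p.2 := by
    intro p hp
    rw [hlc, zipCyc_rotate] at hp
    exact cyc_rel C p (List.mem_rotate.mp hp)
  have hrelq : ∀ p ∈ lq.zip (lq.rotate 1), A p.1 p.2 ∨ part p.1 = part p.2 := by
    intro p hp
    rw [hlq, zipCyc_rotate] at hp
    exact cyc_rel Q p (List.mem_rotate.mp hp)
  have hchainM : M.Chain' fun a b => A a b ∨ part a = part b := by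
    rw [chain'_iff_zip, hMtail]
    intro p hp
    rcases List.mem_append.mp hp with hp | hp
    · exact hrelc p (by rw [zipCyc_eq lc hne₁]; exact List.mem_append_left _ hp)
    · rcases List.mem_cons.mp hp with rfl | hp
      · exact hentry
      · exact hrelq p (by rw [zipCyc_eq lq hne₂]; exact List.mem_append_left _ hp)
  have hnodupM : M.Nodup := by
    refine (List.nodup_rotate.mpr C.toGPath.nodup).append
      (List.nodup_rotate.mpr Q.toGPath.nodup) ?_
    intro a ha hb
    exact hdisj a (List.mem_rotate.mp ha) (List.mem_rotate.mp hb)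
  refine ⟨⟨⟨M, hMne, hnodupM, hchainM⟩, ?_⟩, ?_, ?_⟩
  · rw [hlastM, hheadM]; exact hexit
  · intro w hw
    rcases hw with hw | hw
    · exact List.mem_append_left _ (List.mem_rotate.mpr hw)
    · exact List.mem_append_right _ (List.mem_rotate.mpr hw)
  · -- length computation
    set p : V × V → Bool := fun q => decide (A q.1 q.2) with hp
    have hlenC' : List.countP p (M.zip (M.rotate 1))
        = List.countP p (lc.zip lc.tail) + fA A x v'
          + List.countP p (lq.zip lq.tail) + fA A v y := by
      rw [zipCyc_eq M hMne, hMtail, hlastM, hheadM]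
      simp only [List.countP_append]
      rw [show ((x, v') :: lq.zip lq.tail) = [(x,v')] ++ lq.zip lq.tail by simp]
      simp only [List.countP_append]
      have e1 : List.countP p [(x, v')] = fA A x v' := countP_pair x v'
      have e2 : List.countP p [(v, y)] = fA A v y := countP_pair v y
      omega
    have hcC : List.countP p (lc.zip lc.tail) + fA A x y = C.len := by
      have h1 : List.countP p (lc.zip (lc.rotate 1)) = C.len := by
        rw [hlc, zipCyc_rotate, len_eq_countP]
        exact (List.rotate_perm _ _).countP_eq p
      rw [zipCyc_eq lc hne₁, List.countP_append, hlast₁, hhead₁, countP_pair] at h1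
      exact h1
    have hcQ : List.countP p (lq.zip lq.tail) + fA A v v' = Q.len := by
      have h1 : List.countP p (lq.zip (lq.rotate 1)) = Q.len := by
        rw [hlq, zipCyc_rotate, len_eq_countP]
        exact (List.rotate_perm _ _).countP_eq p
      rw [zipCyc_eq lq hne₂, List.countP_append, hlast₂, hhead₂, countP_pair] at h1
      exact h1
    show List.countP p (M.zip (M.rotate 1)) + fA A x y + fA A v v' = _
    omega

end Stmt10Helpers

open Stmt10Helpers

/-- Let `C ∪ Q` be a G-cycle factor, `C` with at least two vertices, and
suppose there is no spanning G-cycle with at least `ℓ(Q) + ℓ(C)` arcs.  Then every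
vertex `v` of `Q` that is not singular w.r.t. `C` has a partner on `C`, or `v v⁺` is an
arc having a partner on `C`. -/
theorem stmt10 {V K : Type} [Fintype V] {A : V → V → Prop} {part : V → K}
    (hSMD : IsSMD A part) (C Q : GCycle A part)
    (hdisj : ∀ x ∈ C.toGPath.verts, x ∉ Q.toGPath.verts)
    (hcover : ∀ v : V, v ∈ C.toGPath.verts ∨ v ∈ Q.toGPath.verts)
    (hp : 2 ≤ C.toGPath.verts.length)
    (hno : ¬ ∃ C' : GCycle A part,
      (∀ v : V, v ∈ C'.toGPath.verts) ∧ Q.len + C.len ≤ C'.len) :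
    ∀ v v' : V, Q.consec v v' → ¬ C.SingularWrt v →
      C.partner v v ∨ (A v v' ∧ C.partner v v') := by
  intro v v' hvv hsing
  by_contra hgoal
  rw [not_or] at hgoal
  obtain ⟨hNP, hNA⟩ := hgoal
  set L := C.toGPath.verts with hLdef
  have hL : L ≠ [] := C.toGPath.ne
  have hNPc : ∀ w w' : V, C.consec w w' → ¬ (A w v ∧ A v w') := by
    intro w w' h hc
    exact hNP ⟨w, w', h, hc.1, hc.2⟩
  have hOut : ¬ C.OutSingular v := fun h => hsing (Or.inl h)
  have hIn : ¬ C.InSingular v := fun h => hsing (Or.inr h)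
  obtain ⟨a, haL, ha⟩ : ∃ w ∈ L, A w v := by
    by_contra hno'
    push_neg at hno'
    apply hOut
    intro w hw
    refine ⟨fun hne => ?_, hno' w hw⟩
    rcases hSMD.adj v w hne with h | h
    · exact h
    · exact absurd h (hno' w hw)
  obtain ⟨b, hbL, hb⟩ : ∃ w ∈ L, A v w := by
    by_contra hno'
    push_neg at hno'
    apply hIn
    intro w hw
    refine ⟨fun hne => ?_, hno' w hw⟩
    rcases hSMD.adj v w hne with h | h
    · exact absurd h (hno' w hw)
    · exact h
  have hGood : ∀ x y : V, C.consec x y → (A x v' ∨ part x = part v') →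
      (A v y ∨ part v = part y) →
      fA A x y + fA A v v' ≤ fA A x v' + fA A v y → False := by
    intro x y hxy hentry hexit hineq
    obtain ⟨C', hmem, hlen⟩ := build_cycle C Q hdisj hxy hvv hentry hexit
    exact hno ⟨C', fun w => hmem w (hcover w), by omega⟩
  have hQrel : A v v' ∨ part v = part v' := cyc_rel Q (v, v') hvv
  by_cases hpv : part v = part v'
  · -- v and v' lie in the same partite set
    have hnA : ¬ A v v' := hSMD.noInside v v' hpv
    have hstep : ∀ p ∈ L.zip (L.rotate 1), A v p.2 → A v p.1 := by
      rintro ⟨px, py⟩ hmem hPy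
      simp only at hPy ⊢
      have hnpx : ¬ A px v := fun h => hNPc px py hmem ⟨h, hPy⟩
      by_cases hpp : part px = part v
      · refine (hGood px py hmem (Or.inr (hpp.trans hpv)) (Or.inl hPy) ?_).elim
        rw [fA_of hPy, fA_of_not hnA]
        have := fA_le_one (A := A) px py
        have := fA_le_one (A := A) px v'
        omega
      · rcases hSMD.adj v px (fun h => hpp h.symm) with h | h
        · exact h
        · exact absurd h hnpx
    have hall : ∀ w ∈ L, A v w := cyc_prop_bwd L hL hstep b hbL hb
    obtain ⟨y₀, hy₀⟩ := exists_succ L a haL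
    have hy₀L : y₀ ∈ L := List.mem_rotate.mp (List.of_mem_zip hy₀).2
    exact hNPc a y₀ hy₀ ⟨ha, hall y₀ hy₀L⟩
  · -- v → v' is an arc
    have hAvv : A v v' := hQrel.resolve_right hpv
    have hNP' : ∀ w w' : V, C.consec w w' → ¬ (A w v ∧ A v' w') := by
      intro w w' h hc
      exact hNA ⟨hAvv, w, w', h, hc.1, hc.2⟩
    have hstep : ∀ p ∈ L.zip (L.rotate 1),
        (A p.1 v ∨ (part p.1 = part v ∧ A p.1 v')) →
        (A p.2 v ∨ (part p.2 = part v ∧ A p.2 v')) := by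
      rintro ⟨px, py⟩ hmem hPx
      simp only at hPx ⊢
      rcases hPx with hx1 | ⟨hx2, hx3⟩
      · have h1 : ¬ A v py := fun h => hNPc px py hmem ⟨hx1, h⟩
        have h2 : ¬ A v' py := fun h => hNP' px py hmem ⟨hx1, h⟩
        by_cases hpp : part py = part v
        · refine Or.inr ⟨hpp, ?_⟩
          have hne : part py ≠ part v' := fun h => hpv (hpp ▸ h)
          rcases hSMD.adj py v' hne with h | h
          · exact h
          · exact absurd h h2
        · refine Or.inl ?_
          rcases hSMD.adj v py (fun h => hpp h.symm) with h | h
          · exact absurd h h1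
          · exact h
      · by_cases hvy : A v py
        · refine (hGood px py hmem (Or.inl hx3) (Or.inl hvy) ?_).elim
          rw [fA_of hx3, fA_of hvy]
          have := fA_le_one (A := A) px py
          have := fA_le_one (A := A) v v'
          omega
        · by_cases hpp : part py = part v
          · refine (hGood px py hmem (Or.inl hx3) (Or.inr hpp.symm) ?_).elim
            have hnxy : ¬ A px py := hSMD.noInside px py (hx2.trans hpp.symm)
            rw [fA_of hx3, fA_of_not hnxy, fA_of hAvv, fA_of_not hvy]
          · refine Or.inl ?_
            rcases hSMD.adj v py (fun h => hpp h.symm) with h | h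
            · exact absurd h hvy
            · exact h
    have hall := cyc_prop_fwd (P := fun w => A w v ∨ (part w = part v ∧ A w v')) L hL hstep a haL (Or.inl ha)
    obtain ⟨x₀, hx₀⟩ := exists_pred L b hbL
    have hx₀L : x₀ ∈ L := (List.of_mem_zip hx₀).1
    rcases hall x₀ hx₀L with h1 | ⟨h2, h3⟩
    · exact hNPc x₀ b hx₀ ⟨h1, hb⟩
    · refine hGood x₀ b hx₀ (Or.inl h3) (Or.inl hb) ?_
      rw [fA_of h3, fA_of hb]
      have := fA_le_one (A := A) x₀ b
      have := fA_le_one (A := A) v v'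
      omega
end

section
/- Let D be a semicomplete multipartite digraph with a G-cycle factor C_1^g ∪ C_2^g such that both C_1^g and C_2^g have singular vertices with respect to the other, but the pair is feasible (it is not the case that all singular vertices on one cycle are out-singular while all singular vertices on the other are in-singular). Then D has a spanning G-cycle with at least ℓ(C_1^g) + ℓ(C_2^g) arcs. -/
open Classical

universe u v

variable {V : Type u} {K : Type v} {A : V → V → Prop} {part : V → K}

/-! ### Auxiliary list lemmas -/

lemma zip_snoc : ∀ (l : List V) (a c : V),
    (a :: l).zip (l ++ [c]) = (a :: l).zip l ++ [((a :: l).getLast (by simp), c)]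
  | [], a, c => by simp
  | b :: t, a, c => by
    have ih := zip_snoc t b c
    simp only [List.cons_append, List.zip_cons_cons] at *
    rw [ih]
    simp [List.getLast_cons]

lemma cyc_eq {L : List V} (h : L ≠ []) :
    L.zip (L.rotate 1) = L.zip L.tail ++ [(L.getLast h, L.head h)] := by
  cases L with
  | nil => exact absurd rfl h
  | cons a l =>
    have : (a :: l).rotate 1 = l ++ [a] := by
      simpa using List.rotate_cons_succ l a 0
    rw [this, zip_snoc]
    simp

lemma chain'_iff_zip {R : V → V → Prop} : ∀ (L : List V),
    L.Chain' R ↔ ∀ p ∈ L.zip L.tail, R p.1 p.2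
  | [] => by simp [List.Chain']
  | [a] => by simp [List.Chain']
  | a :: b :: t => by
    rw [show List.Chain' R (a :: b :: t) ↔ R a b ∧ List.Chain' R (b :: t) from List.isChain_cons_cons]
    have := chain'_iff_zip (R := R) (b :: t)
    simp only [List.tail_cons, List.zip_cons_cons, List.mem_cons] at *
    constructor
    · rintro ⟨hab, h⟩ p (rfl | hp)
      · exact hab
      · exact this.1 h p hp
    · intro h
      exact ⟨h (a, b) (Or.inl rfl), this.2 fun p hp => h p (Or.inr hp)⟩

lemma zip_drop_take {α : Type u} : ∀ (L M : List α) (n : ℕ),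
    (L.zip M).take n = (L.take n).zip (M.take n) ∧
    (L.zip M).drop n = (L.drop n).zip (M.drop n)
  | [], M, n => by simp
  | L, [], n => by simp
  | a :: l, b :: m, 0 => by simp
  | a :: l, b :: m, n+1 => by
    have := zip_drop_take l m n
    simp [this.1, this.2]

lemma zip_rotate {α : Type u} {L M : List α} (h : L.length = M.length) (i : ℕ) :
    (L.rotate i).zip (M.rotate i) = (L.zip M).rotate i := by
  rcases eq_or_ne L [] with rfl | hL
  · have : M = [] := List.length_eq_zero_iff.1 (h ▸ rfl)
    simp [this]
  have hlen : 0 < L.length := List.length_pos_iff.2 hL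
  have hzlen : (L.zip M).length = L.length := by
    rw [List.length_zip, h, min_self]
  rw [← List.rotate_mod L i, ← List.rotate_mod M i, ← List.rotate_mod (L.zip M) i]
  rw [← h, hzlen]
  set j := i % L.length with hj
  have hjle : j ≤ L.length := le_of_lt (Nat.mod_lt _ hlen)
  rw [List.rotate_eq_drop_append_take hjle,
      List.rotate_eq_drop_append_take (h ▸ hjle),
      List.rotate_eq_drop_append_take (hzlen ▸ hjle)]
  rw [List.zip_append (by simp [h]), (zip_drop_take L M j).1, (zip_drop_take L M j).2]

/-- Cyclic length of a list of vertices: number of consecutive (cyclically) arcs. -/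
noncomputable def clen (A : V → V → Prop) (L : List V) : ℕ :=
  (L.zip (L.rotate 1)).countP fun q => decide (A q.1 q.2)

lemma cyc_rotate (L : List V) (i : ℕ) :
    (L.rotate i).zip ((L.rotate i).rotate 1) = (L.zip (L.rotate 1)).rotate i := by
  rw [List.rotate_rotate, ← Nat.add_comm 1 i, ← List.rotate_rotate,
    zip_rotate (by simp) i]

lemma clen_rotate (L : List V) (i : ℕ) : clen A (L.rotate i) = clen A L := by
  unfold clen
  rw [cyc_rotate]
  exact (List.rotate_perm _ i).countP_eq _

lemma cchain_rotate {L : List V} (i : ℕ)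
    (h : ∀ p ∈ L.zip (L.rotate 1), A p.1 p.2 ∨ part p.1 = part p.2) :
    ∀ p ∈ (L.rotate i).zip ((L.rotate i).rotate 1), A p.1 p.2 ∨ part p.1 = part p.2 := by
  intro p hp
  rw [cyc_rotate] at hp
  exact h p (List.mem_rotate.1 hp)

lemma zip_tail_append : ∀ (M₁ : List V) (M₂ : List V) (h₁ : M₁ ≠ []) (h₂ : M₂ ≠ []),
    (M₁ ++ M₂).zip (M₁ ++ M₂).tail =
      M₁.zip M₁.tail ++ (M₁.getLast h₁, M₂.head h₂) :: M₂.zip M₂.tail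
  | [], _, h₁, _ => absurd rfl h₁
  | [a], M₂, _, h₂ => by
    cases M₂ with
    | nil => exact absurd rfl h₂
    | cons b t => simp
  | a :: b :: l, M₂, _, h₂ => by
    have ih := zip_tail_append (b :: l) M₂ (by simp) h₂
    simp only [List.cons_append, List.tail_cons, List.zip_cons_cons] at *
    rw [ih]
    simp [List.getLast_cons]

lemma head_append' {M₁ M₂ : List V} (h₁ : M₁ ≠ []) :
    (M₁ ++ M₂).head (by simp [h₁]) = M₁.head h₁ := by
  rw [List.head_append]
  simp [h₁]

lemma getLast_append' {M₁ M₂ : List V} (h₂ : M₂ ≠ []) :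
    (M₁ ++ M₂).getLast (by simp [h₂]) = M₂.getLast h₂ := by
  rw [List.getLast_append]
  simp [h₂]

lemma countP_zip_tail {L : List V} (h : L ≠ []) :
    clen A L = (L.zip L.tail).countP (fun q => decide (A q.1 q.2)) +
      (if A (L.getLast h) (L.head h) then 1 else 0) := by
  unfold clen
  rw [cyc_eq h, List.countP_append]
  simp [List.countP_cons]

lemma clen_append {M₁ M₂ : List V} (h₁ : M₁ ≠ []) (h₂ : M₂ ≠ [])
    (hI : (if A (M₁.getLast h₁) (M₁.head h₁) then 1 else 0) +
          (if A (M₂.getLast h₂) (M₂.head h₂) then 1 else 0) ≤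
          (if A (M₁.getLast h₁) (M₂.head h₂) then 1 else 0) +
          (if A (M₂.getLast h₂) (M₁.head h₁) then 1 else 0)) :
    clen A M₁ + clen A M₂ ≤ clen A (M₁ ++ M₂) := by
  have hne : M₁ ++ M₂ ≠ [] := by simp [h₁]
  rw [countP_zip_tail (A := A) hne, countP_zip_tail (A := A) h₁,
    countP_zip_tail (A := A) h₂, zip_tail_append M₁ M₂ h₁ h₂,
    List.countP_append, List.countP_cons, head_append' h₁, getLast_append' h₂]
  simp only [decide_eq_true_eq]
  omega

lemma cchain_append {M₁ M₂ : List V} (h₁ : M₁ ≠ []) (h₂ : M₂ ≠ [])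
    (c₁ : ∀ p ∈ M₁.zip (M₁.rotate 1), A p.1 p.2 ∨ part p.1 = part p.2)
    (c₂ : ∀ p ∈ M₂.zip (M₂.rotate 1), A p.1 p.2 ∨ part p.1 = part p.2)
    (e₁ : A (M₁.getLast h₁) (M₂.head h₂) ∨ part (M₁.getLast h₁) = part (M₂.head h₂))
    (e₂ : A (M₂.getLast h₂) (M₁.head h₁) ∨ part (M₂.getLast h₂) = part (M₁.head h₁)) :
    ∀ p ∈ (M₁ ++ M₂).zip ((M₁ ++ M₂).rotate 1), A p.1 p.2 ∨ part p.1 = part p.2 := by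
  have hne : M₁ ++ M₂ ≠ [] := by simp [h₁]
  intro p hp
  rw [cyc_eq hne, zip_tail_append M₁ M₂ h₁ h₂] at hp
  rw [cyc_eq h₁] at c₁
  rw [cyc_eq h₂] at c₂
  rcases List.mem_append.1 hp with hp | hp
  · rcases List.mem_append.1 hp with hp | hp
    · exact c₁ p (List.mem_append_left _ hp)
    · rcases List.mem_cons.1 hp with rfl | hp
      · exact e₁
      · exact c₂ p (List.mem_append_left _ hp)
  · have : p = ((M₁ ++ M₂).getLast hne, (M₁ ++ M₂).head hne) := by simpa using hp
    rw [this, head_append' h₁, getLast_append' h₂]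
    exact e₂

lemma exists_rotate_head {L : List V} {u : V} (hu : u ∈ L) :
    ∃ i, ∃ h : L.rotate i ≠ [], (L.rotate i).head h = u := by
  have hne : L ≠ [] := List.ne_nil_of_mem hu
  obtain ⟨⟨i, hi⟩, rfl⟩ := List.mem_iff_get.1 hu
  have hr : L.rotate i ≠ [] := by
    simpa [← List.length_pos_iff] using List.length_pos_iff.2 hne
  refine ⟨i, hr, ?_⟩
  rw [List.head_eq_getElem, List.getElem_rotate]
  simp [List.get_eq_getElem, Nat.mod_eq_of_lt hi]

lemma exists_rotate_last {L : List V} {u : V} (hu : u ∈ L) :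
    ∃ i, ∃ h : L.rotate i ≠ [], (L.rotate i).getLast h = u := by
  have hne : L ≠ [] := List.ne_nil_of_mem hu
  have hlen : 0 < L.length := List.length_pos_iff.2 hne
  obtain ⟨⟨i, hi⟩, rfl⟩ := List.mem_iff_get.1 hu
  have hr : L.rotate (i + 1) ≠ [] := by
    simpa [← List.length_pos_iff] using hlen
  refine ⟨i + 1, hr, ?_⟩
  rw [List.getLast_eq_getElem, List.getElem_rotate]
  have h1 : (L.rotate (i+1)).length - 1 + (i + 1) = L.length + i := by
    rw [List.length_rotate]; omega
  rw [h1]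
  have h2 : (L.length + i) % L.length = i := by
    rw [Nat.add_mod_left, Nat.mod_eq_of_lt hi]
  simp [h2, List.get_eq_getElem]

/-! ### G-cycle interface -/

lemma GCycle.cyc_chain (C : GCycle A part) :
    ∀ p ∈ C.toGPath.verts.zip (C.toGPath.verts.rotate 1),
      A p.1 p.2 ∨ part p.1 = part p.2 := by
  intro p hp
  rw [cyc_eq C.toGPath.ne] at hp
  rcases List.mem_append.1 hp with h | h
  · exact (chain'_iff_zip _).1 C.toGPath.chain p h
  · have : p = (C.toGPath.verts.getLast C.toGPath.ne,
        C.toGPath.verts.head C.toGPath.ne) := by simpa using h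
    rw [this]
    exact C.close

/-- Build a G-cycle from a list with the cyclic chain property. -/
def mkGCycle (L : List V) (hne : L ≠ []) (hnd : L.Nodup)
    (hch : ∀ p ∈ L.zip (L.rotate 1), A p.1 p.2 ∨ part p.1 = part p.2) :
    GCycle A part :=
  ⟨⟨L, hne, hnd, (chain'_iff_zip L).2 fun p hp =>
      hch p (by rw [cyc_eq hne]; exact List.mem_append_left _ hp)⟩,
    hch _ (by rw [cyc_eq hne]; exact List.mem_append_right _ (List.mem_singleton_self _))⟩

lemma GCycle.len_eq_clen (C : GCycle A part) : C.len = clen A C.toGPath.verts := rfl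

/-- The merging construction. -/
lemma merge (C₁ C₂ : GCycle A part)
    (hdisj : ∀ x ∈ C₁.toGPath.verts, x ∉ C₂.toGPath.verts)
    (hcover : ∀ v : V, v ∈ C₁.toGPath.verts ∨ v ∈ C₂.toGPath.verts)
    {M₁ M₂ : List V} {i j : ℕ}
    (hM₁ : M₁ = C₁.toGPath.verts.rotate i) (hM₂ : M₂ = C₂.toGPath.verts.rotate j)
    (hne₁ : M₁ ≠ []) (hne₂ : M₂ ≠ [])
    (e₁ : A (M₁.getLast hne₁) (M₂.head hne₂) ∨
      part (M₁.getLast hne₁) = part (M₂.head hne₂))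
    (e₂ : A (M₂.getLast hne₂) (M₁.head hne₁) ∨
      part (M₂.getLast hne₂) = part (M₁.head hne₁))
    (hI : (if A (M₁.getLast hne₁) (M₁.head hne₁) then 1 else 0) +
          (if A (M₂.getLast hne₂) (M₂.head hne₂) then 1 else 0) ≤
          (if A (M₁.getLast hne₁) (M₂.head hne₂) then 1 else 0) +
          (if A (M₂.getLast hne₂) (M₁.head hne₁) then 1 else 0)) :
    ∃ C : GCycle A part, (∀ v : V, v ∈ C.toGPath.verts) ∧ C₁.len + C₂.len ≤ C.len := by
  have hm₁ : ∀ x, x ∈ M₁ ↔ x ∈ C₁.toGPath.verts := by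
    intro x; rw [hM₁]; exact List.mem_rotate
  have hm₂ : ∀ x, x ∈ M₂ ↔ x ∈ C₂.toGPath.verts := by
    intro x; rw [hM₂]; exact List.mem_rotate
  have hnd : (M₁ ++ M₂).Nodup := by
    refine List.nodup_append.2 ⟨?_, ?_, ?_⟩
    · rw [hM₁]; exact List.nodup_rotate.2 C₁.toGPath.nodup
    · rw [hM₂]; exact List.nodup_rotate.2 C₂.toGPath.nodup
    · intro x hx y hx' hxy
      exact hdisj x ((hm₁ x).1 hx) ((hm₂ x).1 (hxy ▸ hx'))
  have hch : ∀ p ∈ (M₁ ++ M₂).zip ((M₁ ++ M₂).rotate 1),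
      A p.1 p.2 ∨ part p.1 = part p.2 := by
    refine cchain_append hne₁ hne₂ ?_ ?_ e₁ e₂
    · rw [hM₁]; exact cchain_rotate i C₁.cyc_chain
    · rw [hM₂]; exact cchain_rotate j C₂.cyc_chain
  refine ⟨mkGCycle (M₁ ++ M₂) (by simp [hne₁]) hnd hch, ?_, ?_⟩
  · intro x
    show x ∈ M₁ ++ M₂
    rcases hcover x with h | h
    · exact List.mem_append_left _ ((hm₁ x).2 h)
    · exact List.mem_append_right _ ((hm₂ x).2 h)
  · have h1 : (mkGCycle (M₁ ++ M₂) (by simp [hne₁]) hnd hch).len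
        = clen A (M₁ ++ M₂) := rfl
    rw [h1, C₁.len_eq_clen, C₂.len_eq_clen]
    calc clen A C₁.toGPath.verts + clen A C₂.toGPath.verts
        = clen A M₁ + clen A M₂ := by
          rw [hM₁, hM₂, clen_rotate, clen_rotate]
      _ ≤ clen A (M₁ ++ M₂) := clen_append hne₁ hne₂ hI

lemma case_inin (hSMD : IsSMD A part) (C₁ C₂ : GCycle A part)
    (hdisj : ∀ x ∈ C₁.toGPath.verts, x ∉ C₂.toGPath.verts)
    (hcover : ∀ v : V, v ∈ C₁.toGPath.verts ∨ v ∈ C₂.toGPath.verts)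
    {u v : V} (hu : u ∈ C₁.toGPath.verts) (hv : v ∈ C₂.toGPath.verts)
    (huI : C₂.InSingular u) (hvI : C₁.InSingular v) :
    ∃ C : GCycle A part, (∀ v : V, v ∈ C.toGPath.verts) ∧ C₁.len + C₂.len ≤ C.len := by
  obtain ⟨i, hne₁, hh₁⟩ := exists_rotate_head hu
  obtain ⟨j, hne₂, hh₂⟩ := exists_rotate_head hv
  set M₁ := C₁.toGPath.verts.rotate i with hM₁
  set M₂ := C₂.toGPath.verts.rotate j with hM₂
  have hl₁ : M₁.getLast hne₁ ∈ C₁.toGPath.verts :=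
    List.mem_rotate.1 (List.getLast_mem hne₁)
  have hl₂ : M₂.getLast hne₂ ∈ C₂.toGPath.verts :=
    List.mem_rotate.1 (List.getLast_mem hne₂)
  have hpart : part u = part v := by
    by_contra hne
    have h1 : A u v := (hvI u hu).1 fun e => hne e.symm
    exact (huI v hv).2 h1
  have i1 : A (M₁.getLast hne₁) u → A (M₁.getLast hne₁) v := by
    intro h
    refine (hvI _ hl₁).1 fun e => ?_
    exact hSMD.noInside _ _ (e.symm.trans hpart.symm) h
  have i2 : A (M₂.getLast hne₂) v → A (M₂.getLast hne₂) u := by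
    intro h
    refine (huI _ hl₂).1 fun e => ?_
    exact hSMD.noInside _ _ (e.symm.trans hpart) h
  refine merge C₁ C₂ hdisj hcover hM₁ hM₂ hne₁ hne₂ ?_ ?_ ?_
  · rw [hh₂]
    by_cases hp : part v = part (M₁.getLast hne₁)
    · exact Or.inr hp.symm
    · exact Or.inl ((hvI _ hl₁).1 hp)
  · rw [hh₁]
    by_cases hp : part u = part (M₂.getLast hne₂)
    · exact Or.inr hp.symm
    · exact Or.inl ((huI _ hl₂).1 hp)
  · rw [hh₁, hh₂]
    have b1 : (if A (M₁.getLast hne₁) u then 1 else 0) ≤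
        (if A (M₁.getLast hne₁) v then 1 else 0) := by
      split_ifs with p q
      · omega
      · exact absurd (i1 p) q
      · omega
      · omega
    have b2 : (if A (M₂.getLast hne₂) v then 1 else 0) ≤
        (if A (M₂.getLast hne₂) u then 1 else 0) := by
      split_ifs with p q
      · omega
      · exact absurd (i2 p) q
      · omega
      · omega
    omega

lemma case_outout (hSMD : IsSMD A part) (C₁ C₂ : GCycle A part)
    (hdisj : ∀ x ∈ C₁.toGPath.verts, x ∉ C₂.toGPath.verts)
    (hcover : ∀ v : V, v ∈ C₁.toGPath.verts ∨ v ∈ C₂.toGPath.verts)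
    {u v : V} (hu : u ∈ C₁.toGPath.verts) (hv : v ∈ C₂.toGPath.verts)
    (huO : C₂.OutSingular u) (hvO : C₁.OutSingular v) :
    ∃ C : GCycle A part, (∀ v : V, v ∈ C.toGPath.verts) ∧ C₁.len + C₂.len ≤ C.len := by
  obtain ⟨i, hne₁, hh₁⟩ := exists_rotate_last hu
  obtain ⟨j, hne₂, hh₂⟩ := exists_rotate_last hv
  set M₁ := C₁.toGPath.verts.rotate i with hM₁
  set M₂ := C₂.toGPath.verts.rotate j with hM₂
  have hd₁ : M₁.head hne₁ ∈ C₁.toGPath.verts :=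
    List.mem_rotate.1 (List.head_mem hne₁)
  have hd₂ : M₂.head hne₂ ∈ C₂.toGPath.verts :=
    List.mem_rotate.1 (List.head_mem hne₂)
  have hpart : part u = part v := by
    by_contra hne
    have h1 : A u v := (huO v hv).1 hne
    exact (hvO u hu).2 h1
  have i1 : A u (M₁.head hne₁) → A v (M₁.head hne₁) := by
    intro h
    refine (hvO _ hd₁).1 fun e => ?_
    exact hSMD.noInside _ _ (hpart.trans e) h
  have i2 : A v (M₂.head hne₂) → A u (M₂.head hne₂) := by
    intro h
    refine (huO _ hd₂).1 fun e => ?_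
    exact hSMD.noInside _ _ (hpart.symm.trans e) h
  refine merge C₁ C₂ hdisj hcover hM₁ hM₂ hne₁ hne₂ ?_ ?_ ?_
  · rw [hh₁]
    by_cases hp : part u = part (M₂.head hne₂)
    · exact Or.inr hp
    · exact Or.inl ((huO _ hd₂).1 hp)
  · rw [hh₂]
    by_cases hp : part v = part (M₁.head hne₁)
    · exact Or.inr hp
    · exact Or.inl ((hvO _ hd₁).1 hp)
  · rw [hh₁, hh₂]
    have b1 : (if A u (M₁.head hne₁) then 1 else 0) ≤
        (if A v (M₁.head hne₁) then 1 else 0) := by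
      split_ifs with p q
      · omega
      · exact absurd (i1 p) q
      · omega
      · omega
    have b2 : (if A v (M₂.head hne₂) then 1 else 0) ≤
        (if A u (M₂.head hne₂) then 1 else 0) := by
      split_ifs with p q
      · omega
      · exact absurd (i2 p) q
      · omega
      · omega
    omega
/-- If `C₁ ∪ C₂` is a G-cycle factor such that both G-cycles have
singular vertices with respect to the other but the pair is feasible (neither
`C₁ ≃> C₂` nor `C₂ ≃> C₁`), then there is a spanning G-cycle with at least
`ℓ(C₁) + ℓ(C₂)` arcs. -/
theorem stmt13 {V K : Type} [Fintype V] {A : V → V → Prop} {part : V → K}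
    (hSMD : IsSMD A part) (C₁ C₂ : GCycle A part)
    (hdisj : ∀ x ∈ C₁.toGPath.verts, x ∉ C₂.toGPath.verts)
    (hcover : ∀ v : V, v ∈ C₁.toGPath.verts ∨ v ∈ C₂.toGPath.verts)
    (h1 : ∃ v ∈ C₁.toGPath.verts, C₂.SingularWrt v)
    (h2 : ∃ v ∈ C₂.toGPath.verts, C₁.SingularWrt v)
    (hfeas : ¬ SimGt C₁ C₂ ∧ ¬ SimGt C₂ C₁) :
    ∃ C : GCycle A part, (∀ v : V, v ∈ C.toGPath.verts) ∧ C₁.len + C₂.len ≤ C.len := by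
  have K₁ : (∃ u ∈ C₁.toGPath.verts, C₂.InSingular u) ∨
      (∃ v ∈ C₂.toGPath.verts, C₁.OutSingular v) := by
    by_contra h
    push_neg at h
    exact hfeas.1 ⟨h1, fun w hw hs => hs.resolve_right (h.1 w hw), h2,
      fun w hw hs => hs.resolve_left (h.2 w hw)⟩
  have K₂ : (∃ v ∈ C₂.toGPath.verts, C₁.InSingular v) ∨
      (∃ u ∈ C₁.toGPath.verts, C₂.OutSingular u) := by
    by_contra h
    push_neg at h
    exact hfeas.2 ⟨h2, fun w hw hs => hs.resolve_right (h.1 w hw), h1,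
      fun w hw hs => hs.resolve_left (h.2 w hw)⟩
  rcases K₁ with ⟨u, hu, huI⟩ | ⟨v, hv, hvO⟩
  · rcases K₂ with ⟨v, hv, hvI⟩ | ⟨u', hu', huO⟩
    · exact case_inin hSMD C₁ C₂ hdisj hcover hu hv huI hvI
    · obtain ⟨v, hv, hs⟩ := h2
      rcases hs with hvO | hvI
      · exact case_outout hSMD C₁ C₂ hdisj hcover hu' hv huO hvO
      · exact case_inin hSMD C₁ C₂ hdisj hcover hu hv huI hvI
  · rcases K₂ with ⟨v', hv', hvI⟩ | ⟨u, hu, huO⟩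
    · obtain ⟨u, hu, hs⟩ := h1
      rcases hs with huO | huI
      · exact case_outout hSMD C₁ C₂ hdisj hcover hu hv huO hvO
      · exact case_inin hSMD C₁ C₂ hdisj hcover hu hv' huI hvI
    · exact case_outout hSMD C₁ C₂ hdisj hcover hu hv huO hvO
end

section
/- Let D be a semicomplete multipartite digraph and let C_1^g, C_2^g be vertex-disjoint G-cycles with C_1^g ≃> C_2^g such that there is no G-cycle in D with vertex set V(C_1^g) ∪ V(C_2^g) and at least ℓ(C_1^g) + ℓ(C_2^g) arcs. Then for every arc uv from C_2^g to C_1^g: (i) u^+ (the successor of u on C_2^g) and v^- (the predecessor of v on C_1^g) belong to the same partite set V; (ii) v^-v and uu^+ are arcs of D (hence u, v ∉ V); and (iii) v^- → u and v → u^+. -/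
open Classical

universe u v

variable {V : Type u} {K : Type v} {A : V → V → Prop} {part : V → K}

namespace Stmt14Helpers

open List

variable {α : Type*}

/-- The list of cyclically consecutive pairs of `l`. -/
def cyc (l : List α) : List (α × α) := l.zip (l.rotate 1)

theorem getLastD_eq_getLast :
    ∀ (t : List α) (x : α), t.getLastD x = (x :: t).getLast (by simp)
  | [], x => rfl
  | y :: t', x => by
    rw [List.getLastD_cons, List.getLast_cons (by simp : (y :: t') ≠ [])]
    exact getLastD_eq_getLast t' y

theorem zipD : ∀ (t : List α) (x c : α),
    (x :: t).zip (t ++ [c]) = (x :: t).zip t ++ [(t.getLastD x, c)]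
  | [], x, c => by simp
  | y :: t', x, c => by
    simp only [List.cons_append, List.zip_cons_cons, zipD t' y c, List.getLastD_cons]

theorem zip_cons_self (x : α) (b : List α) (hb : b ≠ []) :
    (x :: b).zip b = (x, b.head hb) :: b.zip b.tail := by
  cases b with
  | nil => exact absurd rfl hb
  | cons y t => rfl

theorem zipT' : ∀ (t : List α) (x : α) (b : List α) (hb : b ≠ []),
    (x :: (t ++ b)).zip (t ++ b) =
      (x :: t).zip t ++ (t.getLastD x, b.head hb) :: b.zip b.tail
  | [], x, b, hb => by simpa using zip_cons_self x b hb
  | y :: t', x, b, hb => by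
    have h1 : (y :: t') ++ b = y :: (t' ++ b) := rfl
    rw [h1, List.zip_cons_cons, zipT' t' y b hb]
    simp only [List.zip_cons_cons, List.getLastD_cons, List.cons_append]

theorem zipT (a b : List α) (ha : a ≠ []) (hb : b ≠ []) :
    (a ++ b).zip ((a ++ b).tail) =
      a.zip a.tail ++ (a.getLast ha, b.head hb) :: b.zip b.tail := by
  cases a with
  | nil => exact absurd rfl ha
  | cons x t =>
    have h1 : (x :: t) ++ b = x :: (t ++ b) := rfl
    have h2 : (x :: (t ++ b)).tail = t ++ b := rfl
    rw [h1, h2, zipT' t x b hb, ← getLastD_eq_getLast]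
    rfl

theorem cyc_eq (l : List α) (h : l ≠ []) :
    cyc l = l.zip l.tail ++ [(l.getLast h, l.head h)] := by
  cases l with
  | nil => exact absurd rfl h
  | cons x t =>
    show (x :: t).zip ((x :: t).rotate 1) = _
    rw [show (x :: t).rotate 1 = t ++ [x] by
      simpa using List.rotate_cons_succ t x 0]
    rw [zipD t x x, ← getLastD_eq_getLast]
    rfl

theorem zip_rotate_one (l m : List α) (h : l.length = m.length) :
    (l.rotate 1).zip (m.rotate 1) = (l.zip m).rotate 1 := by
  cases l with
  | nil =>
    cases m with
    | nil => simp
    | cons b m' => simp at h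
  | cons a l' =>
    cases m with
    | nil => simp at h
    | cons b m' =>
      have h' : l'.length = m'.length := by simpa using h
      rw [show (a :: l').rotate 1 = l' ++ [a] by simpa using List.rotate_cons_succ l' a 0]
      rw [show (b :: m').rotate 1 = m' ++ [b] by simpa using List.rotate_cons_succ m' b 0]
      rw [List.zip_cons_cons,
        show ((a, b) :: l'.zip m').rotate 1 = l'.zip m' ++ [(a, b)] by
          simpa using List.rotate_cons_succ (l'.zip m') (a, b) 0]
      rw [List.zip_append h']
      rfl

theorem cyc_rotate (l : List α) : ∀ k, cyc (l.rotate k) = (cyc l).rotate k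
  | 0 => by simp [cyc]
  | k + 1 => by
    have h1 : l.rotate (k + 1) = (l.rotate k).rotate 1 := by
      rw [List.rotate_rotate]
    rw [h1]
    show (((l.rotate k).rotate 1)).zip ((((l.rotate k)).rotate 1).rotate 1) = _
    rw [zip_rotate_one _ _ (by simp), ← cyc, cyc_rotate l k, List.rotate_rotate]

theorem two_le_length {l : List α} {x y : α} (hx : x ∈ l) (hy : y ∈ l) (hxy : x ≠ y) :
    2 ≤ l.length := by
  cases l with
  | nil => simp at hx
  | cons a t =>
    cases t with
    | nil =>
      simp only [List.mem_singleton] at hx hy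
      exact absurd (hx.trans hy.symm) hxy
    | cons b t' => simp [List.length_cons]

end Stmt14Helpers

namespace Stmt14Helpers

open List

variable {V K : Type}

section counting
variable (A : V → V → Prop)

/-- arc indicator -/
noncomputable def cA (x y : V) : ℕ := if A x y then 1 else 0

/-- number of arcs among a list of pairs -/
noncomputable def np (l : List (V × V)) : ℕ := l.countP fun q => decide (A q.1 q.2)

theorem cA_le_one (x y : V) : cA A x y ≤ 1 := by
  unfold cA; split <;> simp

theorem cA_of_arc {x y : V} (h : A x y) : cA A x y = 1 := if_pos h

theorem arc_of_cA {x y : V} (h : cA A x y = 1) : A x y := by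
  by_contra hc; rw [cA, if_neg hc] at h; exact absurd h (by simp)

theorem not_arc_of_cA {x y : V} (h : cA A x y = 0) : ¬ A x y := by
  intro hc; rw [cA, if_pos hc] at h; exact absurd h (by simp)

theorem np_nil : np A ([] : List (V × V)) = 0 := rfl

theorem np_cons (p : V × V) (l : List (V × V)) :
    np A (p :: l) = np A l + cA A p.1 p.2 := by
  rw [np, List.countP_cons, ← np, cA]
  simp only [decide_eq_true_eq]

theorem np_append (l₁ l₂ : List (V × V)) :
    np A (l₁ ++ l₂) = np A l₁ + np A l₂ := List.countP_append

theorem np_perm {l₁ l₂ : List (V × V)} (h : l₁.Perm l₂) : np A l₁ = np A l₂ :=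
  h.countP_eq _

theorem np_singleton (p : V × V) : np A [p] = cA A p.1 p.2 := by
  rw [np_cons, np_nil]; omega

theorem np_cons' (x y : V) (l : List (V × V)) :
    np A ((x, y) :: l) = np A l + cA A x y := np_cons A _ l

theorem np_singleton' (x y : V) : np A [(x, y)] = cA A x y := np_singleton A _

theorem np_cyc_singleton (x : V) : np A (cyc [x]) = cA A x x := by
  rw [show cyc [x] = [(x, x)] by simp [cyc], np_singleton]

theorem np_cyc_eq (l : List V) (h : l ≠ []) :
    np A (cyc l) = np A (l.zip l.tail) + cA A (l.getLast h) (l.head h) := by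
  rw [cyc_eq l h, np_append, np_singleton]

theorem np_cyc_rotate (l : List V) (k : ℕ) : np A (cyc (l.rotate k)) = np A (cyc l) := by
  rw [cyc_rotate l k]
  exact np_perm A (List.rotate_perm _ _)

theorem cyc_count_append (a b : List V) (ha : a ≠ []) (hb : b ≠ []) :
    np A (cyc (a ++ b)) + cA A (a.getLast ha) (a.head ha) + cA A (b.getLast hb) (b.head hb)
      = np A (cyc a) + np A (cyc b)
        + cA A (a.getLast ha) (b.head hb) + cA A (b.getLast hb) (a.head ha) := by
  have hab : a ++ b ≠ [] := by
    intro h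
    rw [List.append_eq_nil_iff] at h
    exact ha h.1
  have hLast : (a ++ b).getLast hab = b.getLast hb := by
    rw [List.getLast_append]
    simp [hb]
  have hHead : (a ++ b).head hab = a.head ha := by
    cases a with
    | nil => exact absurd rfl ha
    | cons x t => rfl
  rw [np_cyc_eq A (a ++ b) hab, zipT a b ha hb, np_append, np_cons', hLast, hHead,
    np_cyc_eq A a ha, np_cyc_eq A b hb]
  omega

end counting

section cyf

/-- the `i`-th vertex of the cyclic list `l` -/
def cyf (l : List V) (hl : l ≠ []) (i : ℕ) : V :=
  l[i % l.length]'(Nat.mod_lt _ (List.length_pos_iff.mpr hl))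

variable {l : List V} (hl : l ≠ [])

theorem cyf_congr {i j : ℕ} (h : i % l.length = j % l.length) :
    cyf l hl i = cyf l hl j := by
  simp only [cyf]
  congr 1

theorem cyf_add_len (i : ℕ) : cyf l hl (i + l.length) = cyf l hl i :=
  cyf_congr hl (Nat.add_mod_right _ _)

theorem cyf_add_mul (i q : ℕ) : cyf l hl (i + l.length * q) = cyf l hl i := by
  induction q with
  | zero => rfl
  | succ n ih =>
    rw [Nat.mul_succ, ← Nat.add_assoc, cyf_add_len hl _]
    exact ih

theorem cyf_mem (i : ℕ) : cyf l hl i ∈ l := List.getElem_mem _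

theorem cyf_eq_getElem {i : ℕ} (h : i < l.length) : cyf l hl i = l[i] := by
  simp only [cyf]
  congr 1
  exact Nat.mod_eq_of_lt h

theorem cyf_mod (i : ℕ) : cyf l hl (i % l.length) = cyf l hl i :=
  cyf_congr hl (Nat.mod_eq_of_lt (Nat.mod_lt _ (List.length_pos_iff.mpr hl)))

theorem exists_cyf {x : V} (hx : x ∈ l) : ∃ i, x = cyf l hl i := by
  obtain ⟨n, hn, he⟩ := List.mem_iff_getElem.mp hx
  exact ⟨n, by rw [cyf_eq_getElem hl hn, he]⟩

theorem getElem_rotate_cyf (k : ℕ) {i : ℕ} (h : i < (l.rotate k).length) :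
    (l.rotate k)[i] = cyf l hl (i + k) := by
  rw [List.getElem_rotate]
  simp only [cyf]

theorem rotate_ne_nil (k : ℕ) (hl : l ≠ []) : l.rotate k ≠ [] := by
  intro h
  have := List.length_rotate l k
  rw [h] at this
  exact hl (List.length_eq_zero_iff.mp this.symm)

theorem head_rotate (k : ℕ) (h : l.rotate k ≠ []) :
    (l.rotate k).head h = cyf l hl k := by
  rw [List.head_eq_getElem, getElem_rotate_cyf hl k, Nat.zero_add]

theorem getLast_rotate (k : ℕ) (h : l.rotate k ≠ []) :
    (l.rotate k).getLast h = cyf l hl (l.length - 1 + k) := by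
  rw [List.getLast_eq_getElem]
  have hlen : (l.rotate k).length - 1 < (l.rotate k).length := by
    rw [List.length_rotate]
    have := List.length_pos_iff.mpr hl
    omega
  rw [getElem_rotate_cyf hl k hlen, List.length_rotate]

end cyf

end Stmt14Helpers
namespace Stmt14Helpers

open List

variable {V K : Type} {A : V → V → Prop} {part : V → K}

theorem len_eq (C : GCycle A part) : C.len = np A (cyc C.toGPath.verts) := rfl

section more_cyf
variable {l : List V} (hl : l ≠ [])

theorem cyf_mod_add (i k : ℕ) : cyf l hl (i % l.length + k) = cyf l hl (i + k) := by
  have hpos : 0 < l.length := List.length_pos_iff.mpr hl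
  apply cyf_congr
  conv_lhs => rw [Nat.add_mod]
  conv_rhs => rw [Nat.add_mod]
  rw [Nat.mod_eq_of_lt (Nat.mod_lt _ hpos)]

end more_cyf

theorem cyc_rel (C : GCycle A part) (i : ℕ) :
    A (cyf C.toGPath.verts C.toGPath.ne i) (cyf C.toGPath.verts C.toGPath.ne (i + 1)) ∨
      part (cyf C.toGPath.verts C.toGPath.ne i)
        = part (cyf C.toGPath.verts C.toGPath.ne (i + 1)) := by
  obtain ⟨⟨l, hl, hnd, hch⟩, hcl⟩ := C
  dsimp only at *
  have hpos : 0 < l.length := List.length_pos_iff.mpr hl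
  have ha : i % l.length < l.length := Nat.mod_lt _ hpos
  have e1 : cyf l hl i = cyf l hl (i % l.length) := (cyf_mod hl i).symm
  have e2 : cyf l hl (i + 1) = cyf l hl (i % l.length + 1) := (cyf_mod_add hl i 1).symm
  rw [e1, e2]
  by_cases h2 : i % l.length + 1 < l.length
  · have h3 := List.isChain_iff_getElem.mp hch (i % l.length) (by omega)
    rw [cyf_eq_getElem hl ha, cyf_eq_getElem hl h2]
    exact h3
  · have h3 : i % l.length + 1 = l.length := by omega
    have e3 : cyf l hl (i % l.length + 1) = cyf l hl 0 := by
      apply cyf_congr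
      rw [h3, Nat.mod_self, Nat.zero_mod]
    have e4 : cyf l hl (i % l.length) = l.getLast hl := by
      rw [List.getLast_eq_getElem, cyf_eq_getElem hl ha]
      congr 1
      omega
    have e5 : cyf l hl 0 = l.head hl := by
      rw [List.head_eq_getElem, cyf_eq_getElem hl hpos]
    rw [e3, e4, e5]
    exact hcl

theorem consec_iff (C : GCycle A part) (x y : V) :
    C.consec x y ↔ ∃ i, x = cyf C.toGPath.verts C.toGPath.ne i ∧
      y = cyf C.toGPath.verts C.toGPath.ne (i + 1) := by
  obtain ⟨⟨l, hl, hnd, hch⟩, hcl⟩ := C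
  unfold GCycle.consec
  dsimp only
  have hpos : 0 < l.length := List.length_pos_iff.mpr hl
  have hlen : (l.zip (l.rotate 1)).length = l.length := by
    rw [List.length_zip, List.length_rotate, min_self]
  constructor
  · intro h
    obtain ⟨n', hn', he⟩ := List.mem_iff_getElem.mp h
    have hn : n' < l.length := by rwa [hlen] at hn'
    rw [List.getElem_zip] at he
    refine ⟨n', ?_, ?_⟩
    · show x = cyf l hl n'
      rw [cyf_eq_getElem hl hn]
      exact congrArg Prod.fst he.symm
    · show y = cyf l hl (n' + 1)
      rw [← getElem_rotate_cyf hl 1 (by rwa [List.length_rotate])]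
      have := congrArg Prod.snd he
      simpa using this.symm
  · rintro ⟨i, hx, hy⟩
    have hx' : x = cyf l hl i := hx
    have hy' : y = cyf l hl (i + 1) := hy
    have ha : i % l.length < l.length := Nat.mod_lt _ hpos
    apply List.mem_iff_getElem.mpr
    refine ⟨i % l.length, by rwa [hlen], ?_⟩
    rw [List.getElem_zip]
    have e1 : l[i % l.length] = cyf l hl i := by
      rw [← cyf_eq_getElem hl ha, cyf_mod]
    have e2 : (l.rotate 1)[i % l.length]'(by rwa [List.length_rotate]) = cyf l hl (i + 1) := by
      rw [getElem_rotate_cyf hl 1, cyf_mod_add]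
    rw [e1, e2, ← hx', ← hy']

theorem chain'_rotate (C : GCycle A part) (k : ℕ) :
    (C.toGPath.verts.rotate k).Chain' (fun a b => A a b ∨ part a = part b) := by
  have hl : C.toGPath.verts ≠ [] := C.toGPath.ne
  dsimp only [List.Chain']; rw [List.isChain_iff_getElem]
  intro i h
  rw [List.length_rotate] at h
  have h1 : i < (C.toGPath.verts.rotate k).length := by rw [List.length_rotate]; omega
  have h2 : i + 1 < (C.toGPath.verts.rotate k).length := by rw [List.length_rotate]; omega
  rw [getElem_rotate_cyf hl k h1,
    getElem_rotate_cyf hl k h2]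
  have e : i + 1 + k = (i + k) + 1 := by omega
  rw [e]
  exact cyc_rel C (i + k)

theorem chain'_dropLast_rotate (C : GCycle A part) (k : ℕ) :
    (C.toGPath.verts.rotate k).dropLast.Chain' (fun a b => A a b ∨ part a = part b) :=
  (chain'_rotate C k).prefix (List.dropLast_prefix _)

end Stmt14Helpers
namespace Stmt14Helpers

open List

variable {V K : Type} {A : V → V → Prop} {part : V → K}

theorem getLast_append' (a b : List V) (hb : b ≠ []) (h : a ++ b ≠ []) :
    (a ++ b).getLast h = b.getLast hb := by
  rw [List.getLast_append]
  simp [hb]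

theorem head_append' (a b : List V) (ha : a ≠ []) (h : a ++ b ≠ []) :
    (a ++ b).head h = a.head ha := by
  cases a with
  | nil => exact absurd rfl ha
  | cons x t => rfl

theorem append_ne_nil_left {a b : List V} (ha : a ≠ []) : a ++ b ≠ [] := by
  intro h
  rw [List.append_eq_nil_iff] at h
  exact ha h.1

theorem no_long (C₁ C₂ : GCycle A part)
    (hno : ¬ ∃ C : GCycle A part,
      (∀ v : V, v ∈ C.toGPath.verts ↔ v ∈ C₁.toGPath.verts ∨ v ∈ C₂.toGPath.verts) ∧
      C₁.len + C₂.len ≤ C.len)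
    (M : List V) (hne : M ≠ []) (hnd : M.Nodup)
    (hch : M.Chain' fun a b => A a b ∨ part a = part b)
    (hcl : A (M.getLast hne) (M.head hne) ∨ part (M.getLast hne) = part (M.head hne))
    (hmem : ∀ w, w ∈ M ↔ w ∈ C₁.toGPath.verts ∨ w ∈ C₂.toGPath.verts) :
    ¬ (C₁.len + C₂.len ≤ np A (cyc M)) := by
  intro hlen
  exact hno ⟨⟨⟨M, hne, hnd, hch⟩, hcl⟩, hmem, hlen⟩

theorem simple_merge (C₁ C₂ : GCycle A part)
    (hdisj : ∀ x ∈ C₁.toGPath.verts, x ∉ C₂.toGPath.verts)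
    (hno : ¬ ∃ C : GCycle A part,
      (∀ v : V, v ∈ C.toGPath.verts ↔ v ∈ C₁.toGPath.verts ∨ v ∈ C₂.toGPath.verts) ∧
      C₁.len + C₂.len ≤ C.len)
    (i m : ℕ)
    (harc : A (cyf C₂.toGPath.verts C₂.toGPath.ne i) (cyf C₁.toGPath.verts C₁.toGPath.ne m))
    (hjun : A (cyf C₁.toGPath.verts C₁.toGPath.ne (C₁.toGPath.verts.length - 1 + m))
        (cyf C₂.toGPath.verts C₂.toGPath.ne (i + 1)) ∨
      part (cyf C₁.toGPath.verts C₁.toGPath.ne (C₁.toGPath.verts.length - 1 + m))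
        = part (cyf C₂.toGPath.verts C₂.toGPath.ne (i + 1))) :
    A (cyf C₁.toGPath.verts C₁.toGPath.ne (C₁.toGPath.verts.length - 1 + m))
        (cyf C₁.toGPath.verts C₁.toGPath.ne m) ∧
      A (cyf C₂.toGPath.verts C₂.toGPath.ne i) (cyf C₂.toGPath.verts C₂.toGPath.ne (i + 1)) ∧
      ¬ A (cyf C₁.toGPath.verts C₁.toGPath.ne (C₁.toGPath.verts.length - 1 + m))
        (cyf C₂.toGPath.verts C₂.toGPath.ne (i + 1)) := by
  set l₁ := C₁.toGPath.verts with hldef₁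
  set l₂ := C₂.toGPath.verts with hldef₂
  have h₁ : l₁ ≠ [] := C₁.toGPath.ne
  have h₂ : l₂ ≠ [] := C₂.toGPath.ne
  have harc' : A (cyf l₂ h₂ i) (cyf l₁ h₁ m) := harc
  have hjun' : A (cyf l₁ h₁ (l₁.length - 1 + m)) (cyf l₂ h₂ (i + 1)) ∨
      part (cyf l₁ h₁ (l₁.length - 1 + m)) = part (cyf l₂ h₂ (i + 1)) := hjun
  set r₁ := l₁.rotate m with hr1def
  set r₂ := l₂.rotate (i + 1) with hr2def
  have hr₁ne : r₁ ≠ [] := rotate_ne_nil m h₁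
  have hr₂ne : r₂ ≠ [] := rotate_ne_nil (i + 1) h₂
  have hMne : r₁ ++ r₂ ≠ [] := append_ne_nil_left hr₁ne
  have headr₁ : r₁.head hr₁ne = cyf l₁ h₁ m := head_rotate h₁ m hr₁ne
  have lastr₁ : r₁.getLast hr₁ne = cyf l₁ h₁ (l₁.length - 1 + m) := getLast_rotate h₁ m hr₁ne
  have headr₂ : r₂.head hr₂ne = cyf l₂ h₂ (i + 1) := head_rotate h₂ (i + 1) hr₂ne
  have lastr₂ : r₂.getLast hr₂ne = cyf l₂ h₂ i := by
    rw [getLast_rotate h₂ (i + 1) hr₂ne]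
    rw [show l₂.length - 1 + (i + 1) = i + l₂.length by
      have := List.length_pos_iff.mpr h₂; omega]
    exact cyf_add_len h₂ i
  have hperm : r₁ ++ r₂ ~ l₁ ++ l₂ :=
    List.Perm.append (List.rotate_perm l₁ m) (List.rotate_perm l₂ (i + 1))
  have hnd : (r₁ ++ r₂).Nodup := by
    apply hperm.symm.nodup
    exact List.nodup_append'.mpr ⟨C₁.toGPath.nodup, C₂.toGPath.nodup,
      fun a ha hb => hdisj a ha hb⟩
  have hmem : ∀ w, w ∈ r₁ ++ r₂ ↔ w ∈ l₁ ∨ w ∈ l₂ := by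
    intro w
    rw [hperm.mem_iff, List.mem_append]
  have hch : (r₁ ++ r₂).Chain' (fun a b => A a b ∨ part a = part b) := by
    apply List.isChain_append.mpr
    refine ⟨chain'_rotate C₁ m, chain'_rotate C₂ (i + 1), ?_⟩
    intro x hx y hy
    rw [List.getLast?_eq_getLast hr₁ne] at hx
    rw [List.head?_eq_head hr₂ne] at hy
    simp only [Option.mem_def, Option.some_inj] at hx hy
    rw [← hx, ← hy, lastr₁, headr₂]
    exact hjun'
  have hcl : A ((r₁ ++ r₂).getLast hMne) ((r₁ ++ r₂).head hMne) ∨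
      part ((r₁ ++ r₂).getLast hMne) = part ((r₁ ++ r₂).head hMne) := by
    rw [getLast_append' r₁ r₂ hr₂ne, head_append' r₁ r₂ hr₁ne, lastr₂, headr₁]
    exact Or.inl harc'
  have hlong := no_long C₁ C₂ hno (r₁ ++ r₂) hMne hnd hch hcl hmem
  have hcount := cyc_count_append A r₁ r₂ hr₁ne hr₂ne
  rw [lastr₁, headr₁, lastr₂, headr₂] at hcount
  have er1 : np A (cyc r₁) = np A (cyc l₁) := by rw [hr1def]; exact np_cyc_rotate A l₁ m
  have er2 : np A (cyc r₂) = np A (cyc l₂) := by rw [hr2def]; exact np_cyc_rotate A l₂ (i + 1)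
  rw [er1, er2] at hcount
  have hL1 : C₁.len = np A (cyc l₁) := len_eq C₁
  have hL2 : C₂.len = np A (cyc l₂) := len_eq C₂
  have hlt : np A (cyc (r₁ ++ r₂)) < C₁.len + C₂.len := Nat.lt_of_not_le hlong
  have hone : cA A (cyf l₂ h₂ i) (cyf l₁ h₁ m) = 1 := cA_of_arc A harc'
  have b1 : cA A (cyf l₁ h₁ (l₁.length - 1 + m)) (cyf l₁ h₁ m) ≤ 1 := cA_le_one A _ _
  have b2 : cA A (cyf l₂ h₂ i) (cyf l₂ h₂ (i + 1)) ≤ 1 := cA_le_one A _ _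
  have b3 : cA A (cyf l₁ h₁ (l₁.length - 1 + m)) (cyf l₂ h₂ (i + 1)) ≤ 1 := cA_le_one A _ _
  have g1 : cA A (cyf l₁ h₁ (l₁.length - 1 + m)) (cyf l₁ h₁ m) = 1 := by omega
  have g2 : cA A (cyf l₂ h₂ i) (cyf l₂ h₂ (i + 1)) = 1 := by omega
  have g3 : cA A (cyf l₁ h₁ (l₁.length - 1 + m)) (cyf l₂ h₂ (i + 1)) = 0 := by omega
  exact ⟨arc_of_cA A g1, arc_of_cA A g2, not_arc_of_cA A g3⟩

end Stmt14Helpers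
namespace Stmt14Helpers

open List

variable {V K : Type} {A : V → V → Prop} {part : V → K}

section dropLastHelpers

variable {l : List V} (hl : l ≠ [])

theorem dropLast_rotate_ne_nil (k : ℕ) (h2 : 2 ≤ l.length) : (l.rotate k).dropLast ≠ [] := by
  apply List.length_pos_iff.mp
  rw [List.length_dropLast, List.length_rotate]
  omega

theorem head_dropLast_rotate (k : ℕ) (h : (l.rotate k).dropLast ≠ []) :
    (l.rotate k).dropLast.head h = cyf l hl k := by
  rw [List.head_eq_getElem, List.getElem_dropLast, getElem_rotate_cyf hl k, Nat.zero_add]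

theorem getLast_dropLast_rotate (k : ℕ) (h : (l.rotate k).dropLast ≠ []) :
    (l.rotate k).dropLast.getLast h = cyf l hl (l.length - 2 + k) := by
  rw [List.getLast_eq_getElem, List.getElem_dropLast, getElem_rotate_cyf hl k]
  apply cyf_congr
  rw [List.length_dropLast, List.length_rotate,
    show l.length - 1 - 1 + k = l.length - 2 + k by omega]

theorem split_rotate (k : ℕ) :
    (l.rotate k).dropLast ++ [cyf l hl (l.length - 1 + k)] = l.rotate k := by
  rw [← getLast_rotate hl k (rotate_ne_nil k hl)]
  exact List.dropLast_append_getLast (rotate_ne_nil k hl)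

theorem cyc_drop (k : ℕ) (h2 : 2 ≤ l.length) (hP : (l.rotate k).dropLast ≠ []) :
    np A (cyc l) + cA A (cyf l hl (l.length - 2 + k)) (cyf l hl k)
      = np A (cyc ((l.rotate k).dropLast))
        + cA A (cyf l hl (l.length - 2 + k)) (cyf l hl (l.length - 1 + k))
        + cA A (cyf l hl (l.length - 1 + k)) (cyf l hl k) := by
  have hrne : l.rotate k ≠ [] := rotate_ne_nil k hl
  have e1 : np A (cyc l) = np A (cyc (l.rotate k)) := (np_cyc_rotate A l k).symm
  have e2 : np A (cyc (l.rotate k)) = np A ((l.rotate k).zip (l.rotate k).tail)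
      + cA A (cyf l hl (l.length - 1 + k)) (cyf l hl k) := by
    rw [np_cyc_eq A (l.rotate k) hrne, getLast_rotate hl k hrne, head_rotate hl k hrne]
  have e3 : np A ((l.rotate k).zip (l.rotate k).tail)
      = np A (((l.rotate k).dropLast).zip ((l.rotate k).dropLast).tail)
        + cA A (cyf l hl (l.length - 2 + k)) (cyf l hl (l.length - 1 + k)) := by
    rw [← split_rotate hl k, zipT _ _ hP (by simp), np_append, np_cons',
      getLast_dropLast_rotate hl k hP]
    simp [np_nil]
  have e4 : np A (cyc ((l.rotate k).dropLast))
      = np A (((l.rotate k).dropLast).zip ((l.rotate k).dropLast).tail)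
        + cA A (cyf l hl (l.length - 2 + k)) (cyf l hl k) := by
    rw [np_cyc_eq A _ hP, getLast_dropLast_rotate hl k hP, head_dropLast_rotate hl k hP]
  omega

end dropLastHelpers

theorem cyc_count_cons (x : V) (b : List V) (hb : b ≠ []) :
    np A (cyc (x :: b)) + cA A (b.getLast hb) (b.head hb)
      = np A (cyc b) + cA A x (b.head hb) + cA A (b.getLast hb) x := by
  have h := cyc_count_append A [x] b (by simp) hb
  rw [show ([x] : List V) ++ b = x :: b from rfl] at h
  simp only [List.getLast_singleton, List.head_cons, np_cyc_singleton] at h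
  omega

theorem four_block (C₁ C₂ : GCycle A part)
    (hdisj : ∀ x ∈ C₁.toGPath.verts, x ∉ C₂.toGPath.verts)
    (hno : ¬ ∃ C : GCycle A part,
      (∀ v : V, v ∈ C.toGPath.verts ↔ v ∈ C₁.toGPath.verts ∨ v ∈ C₂.toGPath.verts) ∧
      C₁.len + C₂.len ≤ C.len)
    (hn₁ : 2 ≤ C₁.toGPath.verts.length) (hn₂ : 2 ≤ C₂.toGPath.verts.length)
    (i m : ℕ)
    (ha1 : A (cyf C₂.toGPath.verts C₂.toGPath.ne (i + 1))
      (cyf C₁.toGPath.verts C₁.toGPath.ne (C₁.toGPath.verts.length - 1 + m)))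
    (ha2 : A (cyf C₁.toGPath.verts C₁.toGPath.ne (C₁.toGPath.verts.length - 1 + m))
      (cyf C₂.toGPath.verts C₂.toGPath.ne (i + 2)))
    (ha3 : A (cyf C₂.toGPath.verts C₂.toGPath.ne i) (cyf C₁.toGPath.verts C₁.toGPath.ne m))
    (ha4 : A (cyf C₁.toGPath.verts C₁.toGPath.ne (C₁.toGPath.verts.length - 2 + m))
      (cyf C₂.toGPath.verts C₂.toGPath.ne (i + 1))) : False := by
  set l₁ := C₁.toGPath.verts with hldef₁
  set l₂ := C₂.toGPath.verts with hldef₂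
  have h₁ : l₁ ≠ [] := C₁.toGPath.ne
  have h₂ : l₂ ≠ [] := C₂.toGPath.ne
  have ha1' : A (cyf l₂ h₂ (i + 1)) (cyf l₁ h₁ (l₁.length - 1 + m)) := ha1
  have ha2' : A (cyf l₁ h₁ (l₁.length - 1 + m)) (cyf l₂ h₂ (i + 2)) := ha2
  have ha3' : A (cyf l₂ h₂ i) (cyf l₁ h₁ m) := ha3
  have ha4' : A (cyf l₁ h₁ (l₁.length - 2 + m)) (cyf l₂ h₂ (i + 1)) := ha4
  have hP₁ne : (l₁.rotate m).dropLast ≠ [] := dropLast_rotate_ne_nil m hn₁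
  have hP₂ne : (l₂.rotate (i + 2)).dropLast ≠ [] := dropLast_rotate_ne_nil (i + 2) hn₂
  have hQne : ((l₂.rotate (i + 2)).dropLast ++ (l₁.rotate m).dropLast) ≠ [] := append_ne_nil_left hP₂ne
  have hb₁ne : (cyf l₁ h₁ (l₁.length - 1 + m) :: ((l₂.rotate (i + 2)).dropLast ++ (l₁.rotate m).dropLast)) ≠ [] := by simp
  have hMne : (cyf l₂ h₂ (i + 1) :: (cyf l₁ h₁ (l₁.length - 1 + m) :: ((l₂.rotate (i + 2)).dropLast ++ (l₁.rotate m).dropLast))) ≠ [] := by simp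
  have headP₂ : ((l₂.rotate (i + 2)).dropLast).head hP₂ne = cyf l₂ h₂ (i + 2) := head_dropLast_rotate h₂ (i + 2) hP₂ne
  have headP₁ : ((l₁.rotate m).dropLast).head hP₁ne = cyf l₁ h₁ m := head_dropLast_rotate h₁ m hP₁ne
  have lastP₂ : ((l₂.rotate (i + 2)).dropLast).getLast hP₂ne = cyf l₂ h₂ i := by
    rw [getLast_dropLast_rotate h₂ (i + 2) hP₂ne,
      show l₂.length - 2 + (i + 2) = i + l₂.length by omega]
    exact cyf_add_len h₂ i
  have lastP₁ : ((l₁.rotate m).dropLast).getLast hP₁ne = cyf l₁ h₁ (l₁.length - 2 + m) := getLast_dropLast_rotate h₁ m hP₁ne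
  have hQhead : (((l₂.rotate (i + 2)).dropLast ++ (l₁.rotate m).dropLast)).head hQne = cyf l₂ h₂ (i + 2) := by
    rw [head_append' _ _ hP₂ne, headP₂]
  have hQlast : (((l₂.rotate (i + 2)).dropLast ++ (l₁.rotate m).dropLast)).getLast hQne = cyf l₁ h₁ (l₁.length - 2 + m) := by
    rw [getLast_append' _ _ hP₁ne, lastP₁]
  have hb₁last : ((cyf l₁ h₁ (l₁.length - 1 + m) :: ((l₂.rotate (i + 2)).dropLast ++ (l₁.rotate m).dropLast))).getLast hb₁ne = cyf l₁ h₁ (l₁.length - 2 + m) := by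
    rw [List.getLast_cons hQne, hQlast]
  have hMlast : ((cyf l₂ h₂ (i + 1) :: (cyf l₁ h₁ (l₁.length - 1 + m) :: ((l₂.rotate (i + 2)).dropLast ++ (l₁.rotate m).dropLast)))).getLast hMne = cyf l₁ h₁ (l₁.length - 2 + m) := by
    rw [List.getLast_cons hb₁ne, hb₁last]
  -- permutation
  have p2 : l₂.rotate (i + 2) ~ cyf l₂ h₂ (i + 1) :: (l₂.rotate (i + 2)).dropLast := by
    have e := split_rotate h₂ (i + 2)
    rw [show l₂.length - 1 + (i + 2) = (i + 1) + l₂.length by omega,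
      cyf_add_len h₂ (i + 1)] at e
    conv_lhs => rw [← e]
    exact List.perm_append_singleton _ _
  have p1 : l₁.rotate m ~ cyf l₁ h₁ (l₁.length - 1 + m) :: (l₁.rotate m).dropLast := by
    have e := split_rotate h₁ m
    conv_lhs => rw [← e]
    exact List.perm_append_singleton _ _
  have hperm : l₂ ++ l₁ ~ (cyf l₂ h₂ (i + 1) :: (cyf l₁ h₁ (l₁.length - 1 + m) :: ((l₂.rotate (i + 2)).dropLast ++ (l₁.rotate m).dropLast))) := by
    have q1 : l₂ ++ l₁ ~ (cyf l₂ h₂ (i + 1) :: (l₂.rotate (i + 2)).dropLast) ++ (cyf l₁ h₁ (l₁.length - 1 + m) :: (l₁.rotate m).dropLast) :=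
      List.Perm.append ((List.rotate_perm l₂ (i + 2)).symm.trans p2)
        ((List.rotate_perm l₁ m).symm.trans p1)
    have q3 : (l₂.rotate (i + 2)).dropLast ++ cyf l₁ h₁ (l₁.length - 1 + m) :: (l₁.rotate m).dropLast ~ cyf l₁ h₁ (l₁.length - 1 + m) :: ((l₂.rotate (i + 2)).dropLast ++ (l₁.rotate m).dropLast) := List.perm_middle
    exact q1.trans (q3.cons _)
  have hnodup : ((cyf l₂ h₂ (i + 1) :: (cyf l₁ h₁ (l₁.length - 1 + m) :: ((l₂.rotate (i + 2)).dropLast ++ (l₁.rotate m).dropLast)))).Nodup := by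
    apply hperm.nodup
    exact List.nodup_append'.mpr ⟨C₂.toGPath.nodup, C₁.toGPath.nodup,
      fun a ha hb => hdisj a hb ha⟩
  have hmem : ∀ w, w ∈ (cyf l₂ h₂ (i + 1) :: (cyf l₁ h₁ (l₁.length - 1 + m) :: ((l₂.rotate (i + 2)).dropLast ++ (l₁.rotate m).dropLast))) ↔ w ∈ l₁ ∨ w ∈ l₂ := by
    intro w
    rw [← hperm.mem_iff, List.mem_append]
    exact Or.comm
  -- chain
  have hchQ : (((l₂.rotate (i + 2)).dropLast ++ (l₁.rotate m).dropLast)).Chain' (fun a b => A a b ∨ part a = part b) := by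
    apply List.isChain_append.mpr
    refine ⟨chain'_dropLast_rotate C₂ (i + 2), chain'_dropLast_rotate C₁ m, ?_⟩
    intro x hx y hy
    rw [List.getLast?_eq_getLast hP₂ne] at hx
    rw [List.head?_eq_head hP₁ne] at hy
    simp only [Option.mem_def, Option.some_inj] at hx hy
    rw [← hx, ← hy, lastP₂, headP₁]
    exact Or.inl ha3'
  have hchM : ((cyf l₂ h₂ (i + 1) :: (cyf l₁ h₁ (l₁.length - 1 + m) :: ((l₂.rotate (i + 2)).dropLast ++ (l₁.rotate m).dropLast)))).Chain' (fun a b => A a b ∨ part a = part b) := by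
    dsimp only [List.Chain']; rw [List.isChain_cons_cons]
    refine ⟨Or.inl ha1', ?_⟩
    apply List.isChain_cons.mpr
    refine ⟨?_, hchQ⟩
    intro y hy
    rw [List.head?_eq_head hQne] at hy
    simp only [Option.mem_def, Option.some_inj] at hy
    rw [← hy, hQhead]
    exact Or.inl ha2'
  have hclM : A (((cyf l₂ h₂ (i + 1) :: (cyf l₁ h₁ (l₁.length - 1 + m) :: ((l₂.rotate (i + 2)).dropLast ++ (l₁.rotate m).dropLast)))).getLast hMne) (((cyf l₂ h₂ (i + 1) :: (cyf l₁ h₁ (l₁.length - 1 + m) :: ((l₂.rotate (i + 2)).dropLast ++ (l₁.rotate m).dropLast)))).head hMne) ∨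
      part (((cyf l₂ h₂ (i + 1) :: (cyf l₁ h₁ (l₁.length - 1 + m) :: ((l₂.rotate (i + 2)).dropLast ++ (l₁.rotate m).dropLast)))).getLast hMne) = part (((cyf l₂ h₂ (i + 1) :: (cyf l₁ h₁ (l₁.length - 1 + m) :: ((l₂.rotate (i + 2)).dropLast ++ (l₁.rotate m).dropLast)))).head hMne) := by
    rw [hMlast, show ((cyf l₂ h₂ (i + 1) :: (cyf l₁ h₁ (l₁.length - 1 + m) :: ((l₂.rotate (i + 2)).dropLast ++ (l₁.rotate m).dropLast)))).head hMne = cyf l₂ h₂ (i + 1) from rfl]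
    exact Or.inl ha4'
  have hlong := no_long C₁ C₂ hno (cyf l₂ h₂ (i + 1) :: cyf l₁ h₁ (l₁.length - 1 + m) :: ((l₂.rotate (i + 2)).dropLast ++ (l₁.rotate m).dropLast) : List V) hMne hnodup hchM hclM hmem
  have hlt : np A (cyc (cyf l₂ h₂ (i + 1) :: (cyf l₁ h₁ (l₁.length - 1 + m) :: ((l₂.rotate (i + 2)).dropLast ++ (l₁.rotate m).dropLast)))) < C₁.len + C₂.len := Nat.lt_of_not_le hlong
  -- counting
  have E1 := cyc_count_cons (A := A) (cyf l₂ h₂ (i + 1)) (cyf l₁ h₁ (l₁.length - 1 + m) :: ((l₂.rotate (i + 2)).dropLast ++ (l₁.rotate m).dropLast)) hb₁ne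
  rw [hb₁last, show ((cyf l₁ h₁ (l₁.length - 1 + m) :: ((l₂.rotate (i + 2)).dropLast ++ (l₁.rotate m).dropLast))).head hb₁ne = cyf l₁ h₁ (l₁.length - 1 + m) from rfl] at E1
  have E2 := cyc_count_cons (A := A) (cyf l₁ h₁ (l₁.length - 1 + m)) ((l₂.rotate (i + 2)).dropLast ++ (l₁.rotate m).dropLast) hQne
  rw [hQlast, hQhead] at E2
  have E3 := cyc_count_append A (l₂.rotate (i + 2)).dropLast (l₁.rotate m).dropLast hP₂ne hP₁ne
  rw [lastP₂, headP₂, lastP₁, headP₁] at E3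
  have E4 := cyc_drop (A := A) h₂ (i + 2) hn₂ hP₂ne
  rw [show l₂.length - 2 + (i + 2) = i + l₂.length by omega, cyf_add_len h₂ i,
    show l₂.length - 1 + (i + 2) = (i + 1) + l₂.length by omega, cyf_add_len h₂ (i + 1)] at E4
  have E5 := cyc_drop (A := A) h₁ m hn₁ hP₁ne
  have hL1 : C₁.len = np A (cyc l₁) := len_eq C₁
  have hL2 : C₂.len = np A (cyc l₂) := len_eq C₂
  have j1 : cA A (cyf l₂ h₂ (i + 1)) (cyf l₁ h₁ (l₁.length - 1 + m)) = 1 := cA_of_arc A ha1'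
  have j2 : cA A (cyf l₁ h₁ (l₁.length - 1 + m)) (cyf l₂ h₂ (i + 2)) = 1 := cA_of_arc A ha2'
  have j3 : cA A (cyf l₂ h₂ i) (cyf l₁ h₁ m) = 1 := cA_of_arc A ha3'
  have j4 : cA A (cyf l₁ h₁ (l₁.length - 2 + m)) (cyf l₂ h₂ (i + 1)) = 1 := cA_of_arc A ha4'
  have c1 : cA A (cyf l₂ h₂ i) (cyf l₂ h₂ (i + 1)) ≤ 1 := cA_le_one A _ _
  have c2 : cA A (cyf l₂ h₂ (i + 1)) (cyf l₂ h₂ (i + 2)) ≤ 1 := cA_le_one A _ _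
  have c3 : cA A (cyf l₁ h₁ (l₁.length - 2 + m)) (cyf l₁ h₁ (l₁.length - 1 + m)) ≤ 1 := cA_le_one A _ _
  have c4 : cA A (cyf l₁ h₁ (l₁.length - 1 + m)) (cyf l₁ h₁ m) ≤ 1 := cA_le_one A _ _
  omega

end Stmt14Helpers
namespace Stmt14Helpers

open List

variable {V K : Type} {A : V → V → Prop} {part : V → K}

theorem main_claim (hSMD : IsSMD A part) (C₁ C₂ : GCycle A part)
    (hdisj : ∀ x ∈ C₁.toGPath.verts, x ∉ C₂.toGPath.verts)
    (hno : ¬ ∃ C : GCycle A part,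
      (∀ v : V, v ∈ C.toGPath.verts ↔ v ∈ C₁.toGPath.verts ∨ v ∈ C₂.toGPath.verts) ∧
      C₁.len + C₂.len ≤ C.len)
    {s : V} (hs : C₁.InSingular s)
    (hn₁ : 2 ≤ C₁.toGPath.verts.length) (hn₂ : 2 ≤ C₂.toGPath.verts.length) :
    ∀ j i m, cyf C₂.toGPath.verts C₂.toGPath.ne (i + j) = s →
      A (cyf C₂.toGPath.verts C₂.toGPath.ne (i)) (cyf C₁.toGPath.verts C₁.toGPath.ne (m)) →
      (part (cyf C₂.toGPath.verts C₂.toGPath.ne (i + 1)) = part (cyf C₁.toGPath.verts C₁.toGPath.ne (C₁.toGPath.verts.length - 1 + m)) ∧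
        A (cyf C₁.toGPath.verts C₁.toGPath.ne (C₁.toGPath.verts.length - 1 + m)) (cyf C₁.toGPath.verts C₁.toGPath.ne (m)) ∧
        A (cyf C₂.toGPath.verts C₂.toGPath.ne (i)) (cyf C₂.toGPath.verts C₂.toGPath.ne (i + 1)) ∧
        A (cyf C₁.toGPath.verts C₁.toGPath.ne (C₁.toGPath.verts.length - 1 + m)) (cyf C₂.toGPath.verts C₂.toGPath.ne (i)) ∧
        A (cyf C₁.toGPath.verts C₁.toGPath.ne (m)) (cyf C₂.toGPath.verts C₂.toGPath.ne (i + 1))) := by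
  intro j
  induction j with
  | zero =>
    intro i m hseq harc
    exfalso
    have hseq' : cyf C₂.toGPath.verts C₂.toGPath.ne (i) = s := hseq
    exact (hs _ (cyf_mem C₁.toGPath.ne m)).2 (hseq' ▸ harc)
  | succ j ih =>
    intro i m hseq harc
    have hseqs : cyf C₂.toGPath.verts C₂.toGPath.ne ((i + 1) + j) = s := by
      rw [show (i + 1) + j = i + (j + 1) by omega]
      exact hseq
    have sub : ∀ m', A (cyf C₂.toGPath.verts C₂.toGPath.ne (i)) (cyf C₁.toGPath.verts C₁.toGPath.ne (m')) →
        part (cyf C₂.toGPath.verts C₂.toGPath.ne (i + 1)) = part (cyf C₁.toGPath.verts C₁.toGPath.ne (C₁.toGPath.verts.length - 1 + m')) ∧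
        A (cyf C₁.toGPath.verts C₁.toGPath.ne (C₁.toGPath.verts.length - 1 + m')) (cyf C₁.toGPath.verts C₁.toGPath.ne (m')) ∧
        A (cyf C₂.toGPath.verts C₂.toGPath.ne (i)) (cyf C₂.toGPath.verts C₂.toGPath.ne (i + 1)) := by
      intro m' harc'
      have hM1 : ¬ A (cyf C₁.toGPath.verts C₁.toGPath.ne (C₁.toGPath.verts.length - 1 + m')) (cyf C₂.toGPath.verts C₂.toGPath.ne (i + 1)) := by
        intro hbad
        exact (simple_merge C₁ C₂ hdisj hno i m' harc' (Or.inl hbad)).2.2 hbad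
      by_cases hpq : part (cyf C₁.toGPath.verts C₁.toGPath.ne (C₁.toGPath.verts.length - 1 + m')) = part (cyf C₂.toGPath.verts C₂.toGPath.ne (i + 1))
      · have hres := simple_merge C₁ C₂ hdisj hno i m' harc' (Or.inr hpq)
        exact ⟨hpq.symm, hres.1, hres.2.1⟩
      · have harc2 : A (cyf C₂.toGPath.verts C₂.toGPath.ne (i + 1)) (cyf C₁.toGPath.verts C₁.toGPath.ne (C₁.toGPath.verts.length - 1 + m')) := by
          rcases hSMD.adj _ _ (fun h => hpq h.symm) with h | h
          · exact h
          · exact absurd h hM1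
        obtain ⟨e1, e2, e3, e4, e5⟩ := ih (i + 1) (C₁.toGPath.verts.length - 1 + m') hseqs harc2
        have hrw : cyf C₁.toGPath.verts C₁.toGPath.ne (C₁.toGPath.verts.length - 1 + (C₁.toGPath.verts.length - 1 + m')) = cyf C₁.toGPath.verts C₁.toGPath.ne (C₁.toGPath.verts.length - 2 + m') := by
          rw [show C₁.toGPath.verts.length - 1 + (C₁.toGPath.verts.length - 1 + m') = (C₁.toGPath.verts.length - 2 + m') + C₁.toGPath.verts.length by omega]
          exact cyf_add_len C₁.toGPath.ne _
        rw [hrw] at e4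
        rw [show i + 1 + 1 = i + 2 by omega] at e5
        exact (four_block C₁ C₂ hdisj hno hn₁ hn₂ i m' harc2 e5 harc' e4).elim
    obtain ⟨hp, hdd, hcc⟩ := sub m harc
    have hpartc : part (cyf C₂.toGPath.verts C₂.toGPath.ne (i)) ≠ part (cyf C₂.toGPath.verts C₂.toGPath.ne (i + 1)) :=
      fun h => hSMD.noInside _ _ h hcc
    have h4 : A (cyf C₁.toGPath.verts C₁.toGPath.ne (C₁.toGPath.verts.length - 1 + m)) (cyf C₂.toGPath.verts C₂.toGPath.ne (i)) := by
      rcases hSMD.adj (cyf C₁.toGPath.verts C₁.toGPath.ne (C₁.toGPath.verts.length - 1 + m)) (cyf C₂.toGPath.verts C₂.toGPath.ne (i))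
          (fun h => hpartc (hp.trans h).symm) with h | h
      · exact h
      · obtain ⟨hp2, hdd2, _⟩ := sub (C₁.toGPath.verts.length - 1 + m) h
        have hrw : cyf C₁.toGPath.verts C₁.toGPath.ne (C₁.toGPath.verts.length - 1 + (C₁.toGPath.verts.length - 1 + m)) = cyf C₁.toGPath.verts C₁.toGPath.ne (C₁.toGPath.verts.length - 2 + m) := by
          rw [show C₁.toGPath.verts.length - 1 + (C₁.toGPath.verts.length - 1 + m) = (C₁.toGPath.verts.length - 2 + m) + C₁.toGPath.verts.length by omega]
          exact cyf_add_len C₁.toGPath.ne _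
        rw [hrw] at hp2 hdd2
        exact absurd hdd2 (hSMD.noInside _ _ (hp2.symm.trans hp))
    have h5 : A (cyf C₁.toGPath.verts C₁.toGPath.ne (m)) (cyf C₂.toGPath.verts C₂.toGPath.ne (i + 1)) := by
      have hpartm : part (cyf C₁.toGPath.verts C₁.toGPath.ne (m)) ≠ part (cyf C₂.toGPath.verts C₂.toGPath.ne (i + 1)) := by
        intro h
        exact hSMD.noInside _ _ (hp.symm.trans h.symm) hdd
      rcases hSMD.adj _ _ hpartm with h | h
      · exact h
      · obtain ⟨q1, q2, q3, q4, q5⟩ := ih (i + 1) m hseqs h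
        exact absurd q3 (hSMD.noInside _ _ (hp.trans q1.symm))
    exact ⟨hp, hdd, hcc, h4, h5⟩

end Stmt14Helpers

/-- Suppose `C₁ ≃> C₂` are disjoint G-cycles and there is no G-cycle on
`V(C₁) ∪ V(C₂)` with at least `ℓ(C₁) + ℓ(C₂)` arcs.  Then for every arc `uv` from `C₂`
to `C₁` (with `u⁺` the successor of `u` on `C₂` and `v⁻` the predecessor of `v` on
`C₁`): (i) `u⁺` and `v⁻` are in the same partite set `V`; (ii) `v⁻v` and `uu⁺` are arcs
(hence `u, v ∉ V`); (iii) `v⁻ → u` and `v → u⁺`. -/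
theorem stmt14 {V K : Type} {A : V → V → Prop} {part : V → K}
    (hSMD : IsSMD A part) (C₁ C₂ : GCycle A part)
    (hdisj : ∀ x ∈ C₁.toGPath.verts, x ∉ C₂.toGPath.verts)
    (hsim : SimGt C₁ C₂)
    (hno : ¬ ∃ C : GCycle A part,
      (∀ v : V, v ∈ C.toGPath.verts ↔ v ∈ C₁.toGPath.verts ∨ v ∈ C₂.toGPath.verts) ∧
      C₁.len + C₂.len ≤ C.len) :
    ∀ u v u' v' : V, A u v → C₂.consec u u' → C₁.consec v' v →
      (part u' = part v') ∧
      (A v' v ∧ A u u' ∧ part u ≠ part u' ∧ part v ≠ part v') ∧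
      (A v' u ∧ A v u') := by
  intro u v u' v' huv hcu hcv
  open Stmt14Helpers in
  · obtain ⟨t, htmem, htsing⟩ := hsim.1
    have htout : C₂.OutSingular t := hsim.2.1 t htmem htsing
    obtain ⟨s, hsmem, hssing⟩ := hsim.2.2.1
    have hsin : C₁.InSingular s := hsim.2.2.2 s hsmem hssing
    obtain ⟨i, hui, hu'i⟩ := (Stmt14Helpers.consec_iff C₂ u u').mp hcu
    obtain ⟨m0, hv'm, hvm⟩ := (Stmt14Helpers.consec_iff C₁ v' v).mp hcv
    subst hui
    subst hu'i
    subst hv'm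
    subst hvm
    have hv_mem : cyf C₁.toGPath.verts C₁.toGPath.ne (m0 + 1) ∈ C₁.toGPath.verts := by
      exact Stmt14Helpers.cyf_mem C₁.toGPath.ne (m0 + 1)
    have hu_mem : cyf C₂.toGPath.verts C₂.toGPath.ne i ∈ C₂.toGPath.verts := by
      exact Stmt14Helpers.cyf_mem C₂.toGPath.ne i
    have hvt : cyf C₁.toGPath.verts C₁.toGPath.ne (m0 + 1) ≠ t := fun h => (htout _ hu_mem).2 (h ▸ huv)
    have hus : cyf C₂.toGPath.verts C₂.toGPath.ne i ≠ s := fun h => (hsin _ hv_mem).2 (h ▸ huv)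
    have hn₂ : 2 ≤ C₂.toGPath.verts.length := Stmt14Helpers.two_le_length hu_mem hsmem hus
    have hn₁ : 2 ≤ C₁.toGPath.verts.length := Stmt14Helpers.two_le_length hv_mem htmem hvt
    obtain ⟨σ, hσ⟩ := Stmt14Helpers.exists_cyf C₂.toGPath.ne hsmem
    have hseq : cyf C₂.toGPath.verts C₂.toGPath.ne (i + ((σ + C₂.toGPath.verts.length) - i % C₂.toGPath.verts.length)) = s := by
      have hd : C₂.toGPath.verts.length * (i / C₂.toGPath.verts.length) + i % C₂.toGPath.verts.length = i := Nat.div_add_mod i (C₂.toGPath.verts.length)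
      have hm : i % C₂.toGPath.verts.length < C₂.toGPath.verts.length := Nat.mod_lt _ (by omega)
      rw [show i + ((σ + C₂.toGPath.verts.length) - i % C₂.toGPath.verts.length) = (σ + C₂.toGPath.verts.length * (i / C₂.toGPath.verts.length)) + C₂.toGPath.verts.length by omega]
      rw [Stmt14Helpers.cyf_add_len C₂.toGPath.ne, Stmt14Helpers.cyf_add_mul C₂.toGPath.ne, ← hσ]
    have harc' : A (cyf C₂.toGPath.verts C₂.toGPath.ne (i)) (cyf C₁.toGPath.verts C₁.toGPath.ne (m0 + 1)) := huv
    obtain ⟨p1, p2, p3, p4, p5⟩ := Stmt14Helpers.main_claim hSMD C₁ C₂ hdisj hno hsin hn₁ hn₂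
      ((σ + C₂.toGPath.verts.length) - i % C₂.toGPath.verts.length) i (m0 + 1) hseq harc'
    have hconv : cyf C₁.toGPath.verts C₁.toGPath.ne (C₁.toGPath.verts.length - 1 + (m0 + 1)) = cyf C₁.toGPath.verts C₁.toGPath.ne (m0) := by
      rw [show C₁.toGPath.verts.length - 1 + (m0 + 1) = m0 + C₁.toGPath.verts.length by omega]
      exact Stmt14Helpers.cyf_add_len C₁.toGPath.ne m0
    rw [hconv] at p1 p2 p4
    exact ⟨p1, ⟨p2, p3, fun h => hSMD.noInside _ _ h p3, fun h => hSMD.noInside _ _ h.symm p2⟩,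
      p4, p5⟩
end
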